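/- arXiv:1404.2677 — 10 statements merged into one kernel-verified Lean document; each statement's English description precedes it below -/
import Mathlib

section
/- Fix integers k ≥ 1 and m ≥ 1, set τ = 1/(2k+2) and n = 36km. For a sequence Π = (π_1, …, π_m) of permutations of {1, …, 3k}, define the integer array A_Π of length n as follows: the i-th block A_Π[36k(i−1)+1 .. 36ki] consists of nine consecutive chunks of length 4k each, indexed by pairs (a, b) with a, b ∈ {0, 1, 2} taken in lexicographic order with a outermost, where chunk (a, b) is the sequence (bk+1, bk+2, …, (b+1)k, −1, −2, …, −2k, π_i(ak+1), π_i(ak+2), …, π_i((a+1)k)). Then the map sending Π to the function that assigns to every pair (i, j) with 1 ≤ i ≤ j ≤ n the number of distinct τ-majorities of A_Π[i, j] is injective on the set of all sequences of m permutations of {1, …, 3k}. -/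
open scoped Classical

/-- Number of occurrences of `x` in `A[i,j]` (positions `i..j`, 1-based). -/
noncomputable def majCount {α : Type*} (A : ℕ → α) (i j : ℕ) (x : α) : ℕ :=
  ((Finset.Icc i j).filter (fun k => A k = x)).card

/-- `x` is a `τ`-majority in the range `A[i,j]`. -/
def IsMaj {α : Type*} (τ : ℝ) (A : ℕ → α) (i j : ℕ) (x : α) : Prop :=
  τ * ((j : ℝ) - (i : ℝ) + 1) < (majCount A i j x : ℝ)

/-- The number of distinct `τ`-majorities in the range `A[i,j]`. -/
noncomputable def majNum {α : Type*} (τ : ℝ) (A : ℕ → α) (i j : ℕ) : ℕ :=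
  (((Finset.Icc i j).image A).filter (fun x => IsMaj τ A i j x)).card

/-- The array `A_Π` of length `36·k·m` encoding a sequence `P` of `m` permutations of
`{1,…,3k}` (`P i t` is `π_i(t)`).  The `i`-th block (of length `36k`) consists of nine
chunks of length `4k`, indexed by `(a,b)` with `a,b ∈ {0,1,2}` in lexicographic order
(`a` outermost); chunk `(a,b)` is
`(bk+1, …, (b+1)k, −1, −2, …, −2k, π_i(ak+1), …, π_i((a+1)k))`. -/
def permArray (k : ℕ) (P : ℕ → ℕ → ℕ) : ℕ → ℤ := fun p =>
  let i := (p - 1) / (36 * k) + 1        -- block index (1-based)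
  let q := (p - 1) % (36 * k)            -- offset within the block
  let a := q / (4 * k) / 3               -- chunk row index
  let b := q / (4 * k) % 3               -- chunk column index
  let d := q % (4 * k)                   -- offset within the chunk
  if d < k then ((b * k + d + 1 : ℕ) : ℤ)
  else if d < 3 * k then -(((d - k + 1 : ℕ)) : ℤ)
  else ((P i (a * k + (d - 3 * k) + 1) : ℕ) : ℤ)

lemma decomp (k v : ℕ) (hk : 1 ≤ k) (h1 : 1 ≤ v) (h2 : v ≤ 3*k) :
    ∃ b j, b ≤ 2 ∧ 1 ≤ j ∧ j ≤ k ∧ v = b*k + j := by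
  rcases le_or_gt v k with h | h
  · exact ⟨0, v, by omega, by omega, by omega, by omega⟩
  rcases le_or_gt v (2*k) with h' | h'
  · exact ⟨1, v - k, by omega, by omega, by omega, by omega⟩
  · exact ⟨2, v - 2*k, by omega, by omega, by omega, by omega⟩

lemma valA (k : ℕ) (hk : 1 ≤ k) (P : ℕ → ℕ → ℕ) (i a b : ℕ)
    (hi : 1 ≤ i) (ha : a ≤ 2) (hb : b ≤ 2) (e : ℕ) (he1 : 1 ≤ e) (he2 : e ≤ 4*k) :
    permArray k P (36*k*(i-1) + 4*k*(3*a+b) + e) =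
      if e ≤ k then ((b*k+e : ℕ) : ℤ)
      else if e ≤ 3*k then -(((e-k : ℕ)) : ℤ)
      else ((P i (a*k + (e - 3*k)) : ℕ) : ℤ) := by
  have hk0 : 0 < 36*k := by omega
  have hk4 : 0 < 4*k := by omega
  have h8 : 3*a+b ≤ 8 := by omega
  have h32 : 4*k*(3*a+b) ≤ 4*k*8 := Nat.mul_le_mul_left _ h8
  have ht : 4*k*(3*a+b) + (e-1) < 36*k := by omega
  have h1 : 36*k*(i-1) + 4*k*(3*a+b) + e - 1 = 36*k*(i-1) + (4*k*(3*a+b) + (e-1)) := by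
    omega
  have hdiv : (36*k*(i-1) + (4*k*(3*a+b) + (e-1))) / (36*k) = i - 1 := by
    rw [Nat.mul_add_div hk0, Nat.div_eq_of_lt ht, Nat.add_zero]
  have hmod : (36*k*(i-1) + (4*k*(3*a+b) + (e-1))) % (36*k) = 4*k*(3*a+b) + (e-1) := by
    rw [Nat.mul_add_mod, Nat.mod_eq_of_lt ht]
  have he' : e - 1 < 4*k := by omega
  have hdiv2 : (4*k*(3*a+b) + (e-1)) / (4*k) = 3*a+b := by
    rw [Nat.mul_add_div hk4, Nat.div_eq_of_lt he', Nat.add_zero]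
  have hmod2 : (4*k*(3*a+b) + (e-1)) % (4*k) = e - 1 := by
    rw [Nat.mul_add_mod, Nat.mod_eq_of_lt he']
  have hda : (3*a+b)/3 = a := by omega
  have hdb : (3*a+b)%3 = b := by omega
  have hii : i - 1 + 1 = i := by omega
  simp only [permArray]
  rw [h1, hdiv, hmod, hdiv2, hmod2, hda, hdb, hii]
  split_ifs <;> first | omega | (congr 2 <;> omega)

lemma majNum_eq (k : ℕ) (hk : 1 ≤ k) (P : ℕ → ℕ → ℕ) (i a b s r : ℕ)
    (hi : 1 ≤ i) (ha : a ≤ 2) (hb : b ≤ 2) (hs1 : 1 ≤ s) (hs2 : s ≤ k)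
    (hr1 : 1 ≤ r) (hr2 : r ≤ k)
    (hP : Set.BijOn (P i) (Set.Icc 1 (3 * k)) (Set.Icc 1 (3 * k))) :
    majNum ((1 : ℝ) / (2 * k + 2)) (permArray k P)
      (36*k*(i-1) + 4*k*(3*a+b) + r) (36*k*(i-1) + 4*k*(3*a+b) + (3*k + s)) =
    ((Finset.Icc 1 s).filter
      (fun u => b*k+r ≤ P i (a*k+u) ∧ P i (a*k+u) ≤ b*k+k)).card := by
  have hval := valA k hk P i a b hi ha hb
  set base := 36*k*(i-1) + 4*k*(3*a+b) with hbase
  set lo := base + r with hlo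
  set hi2 := base + (3*k + s) with hhi2
  have harg : ∀ u, 1 ≤ u → u ≤ k → a*k + u ∈ Set.Icc 1 (3*k) := by
    intro u h1 h2
    constructor
    · nlinarith
    · nlinarith
  have hPv : ∀ u, 1 ≤ u → u ≤ k → 1 ≤ P i (a*k+u) ∧ P i (a*k+u) ≤ 3*k := by
    intro u h1 h2
    exact hP.mapsTo (harg u h1 h2)
  have hden : (0:ℝ) < 2*(k:ℝ)+2 := by positivity
  have hform : ∀ p, lo ≤ p → p ≤ hi2 → ∀ x : ℤ, permArray k P p = x →
      (∃ j, r ≤ j ∧ j ≤ k ∧ p = base + j ∧ ((b*k+j : ℕ) : ℤ) = x) ∨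
      (∃ u, 1 ≤ u ∧ u ≤ 2*k ∧ p = base + (k + u) ∧ -((u:ℕ):ℤ) = x) ∨
      (∃ u, 1 ≤ u ∧ u ≤ s ∧ p = base + (3*k + u) ∧ ((P i (a*k+u) : ℕ) : ℤ) = x) := by
    intro p hplo hphi x hpx
    have hpe : p = base + (p - base) := by omega
    set e := p - base with he
    have her1 : r ≤ e := by omega
    have her2 : e ≤ 3*k + s := by omega
    rw [hpe, hval e (by omega) (by omega)] at hpx
    split_ifs at hpx with h1 h2
    · exact Or.inl ⟨e, her1, h1, hpe, hpx⟩
    · exact Or.inr (Or.inl ⟨e - k, by omega, by omega, by omega, hpx⟩)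
    · exact Or.inr (Or.inr ⟨e - 3*k, by omega, by omega, by omega, hpx⟩)
  have hinj : Set.InjOn (fun u => ((P i (a*k+u) : ℕ) : ℤ))
      ↑((Finset.Icc 1 s).filter
          (fun u => b*k+r ≤ P i (a*k+u) ∧ P i (a*k+u) ≤ b*k+k)) := by
    intro u1 h1 u2 h2 he
    simp only [Finset.coe_filter, Set.mem_setOf_eq, Finset.mem_Icc] at h1 h2
    have he' : ((P i (a*k+u1) : ℕ) : ℤ) = ((P i (a*k+u2) : ℕ) : ℤ) := he
    have hnat : P i (a*k+u1) = P i (a*k+u2) := by exact_mod_cast he'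
    have := hP.injOn (harg u1 h1.1.1 (by omega)) (harg u2 h2.1.1 (by omega)) hnat
    omega
  simp only [majNum]
  rw [← Finset.card_image_of_injOn hinj]
  congr 1
  ext x
  simp only [Finset.mem_filter, Finset.mem_image, Finset.mem_Icc]
  constructor
  · rintro ⟨⟨p0, hp0, hp0x⟩, hmaj⟩
    simp only [IsMaj] at hmaj
    have hlen1 : lo + (2*k+1) ≤ hi2 := by omega
    have hτlen : (1:ℝ) ≤ (1/(2*(k:ℝ)+2)) * ((hi2:ℝ) - lo + 1) := by
      have hc : ((lo:ℝ)) + (2*(k:ℝ)+1) ≤ (hi2:ℝ) := by exact_mod_cast hlen1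
      rw [div_mul_eq_mul_div, one_mul, le_div_iff₀ hden]
      linarith
    have h2 : 1 < majCount (permArray k P) lo hi2 x := by
      exact_mod_cast lt_of_le_of_lt hτlen hmaj
    rw [majCount] at h2
    obtain ⟨p1, hp1, p2, hp2, hne⟩ := Finset.one_lt_card.mp h2
    simp only [Finset.mem_filter, Finset.mem_Icc] at hp1 hp2
    rcases hform p1 hp1.1.1 hp1.1.2 x hp1.2 with ⟨j1, hj1r, hj1k, hp1e, hx1⟩ |
        ⟨u1, hu11, hu12, hp1e, hx1⟩ | ⟨t1, ht11, ht12, hp1e, hx1⟩ <;>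
      rcases hform p2 hp2.1.1 hp2.1.2 x hp2.2 with ⟨j2, hj2r, hj2k, hp2e, hx2⟩ |
        ⟨u2, hu21, hu22, hp2e, hx2⟩ | ⟨t2, ht21, ht22, hp2e, hx2⟩
    · exfalso; apply hne; have := hx1.trans hx2.symm; omega
    · exfalso; have := hx1.trans hx2.symm; omega
    · have hPe : P i (a*k+t2) = b*k + j1 := by
        have := hx1.trans hx2.symm; omega
      exact ⟨t2, ⟨⟨ht21, ht22⟩, by omega, by omega⟩, hx2⟩
    · exfalso; have := hx1.trans hx2.symm; omega
    · exfalso; apply hne; have := hx1.trans hx2.symm; omega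
    · exfalso
      have := (hPv t2 ht21 (by omega)).1
      have := hx1.trans hx2.symm; omega
    · have hPe : P i (a*k+t1) = b*k + j2 := by
        have := hx1.trans hx2.symm; omega
      exact ⟨t1, ⟨⟨ht11, ht12⟩, by omega, by omega⟩, hx1⟩
    · exfalso
      have := (hPv t1 ht11 (by omega)).1
      have := hx1.trans hx2.symm; omega
    · exfalso; apply hne
      have hcast := hx1.trans hx2.symm
      have hnat : P i (a*k+t1) = P i (a*k+t2) := by omega
      have := hP.injOn (harg t1 ht11 (by omega)) (harg t2 ht21 (by omega)) hnat
      omega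
  · rintro ⟨u, ⟨⟨hu1, hu2⟩, hlb, hub⟩, hxeq⟩
    have hj : r ≤ P i (a*k+u) - b*k ∧ P i (a*k+u) - b*k ≤ k ∧
        P i (a*k+u) = b*k + (P i (a*k+u) - b*k) := by omega
    set j := P i (a*k+u) - b*k with hjdef
    have hA1 : permArray k P (base + j) = x := by
      rw [hval j (by omega) (by omega), if_pos hj.2.1, ← hxeq]
      congr 1
      omega
    have hA2 : permArray k P (base + (3*k + u)) = x := by
      rw [hval (3*k+u) (by omega) (by omega), if_neg (by omega), if_neg (by omega), ← hxeq]
      congr 2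
      omega
    refine ⟨⟨base + (3*k+u), ⟨by omega, by omega⟩, hA2⟩, ?_⟩
    simp only [IsMaj]
    have hcard : 1 < majCount (permArray k P) lo hi2 x := by
      rw [majCount]
      refine Finset.one_lt_card.mpr ⟨base + j, ?_, base + (3*k+u), ?_, by omega⟩
      · simp only [Finset.mem_filter, Finset.mem_Icc]
        exact ⟨⟨by omega, by omega⟩, hA1⟩
      · simp only [Finset.mem_filter, Finset.mem_Icc]
        exact ⟨⟨by omega, by omega⟩, hA2⟩
    have h2c : (2:ℝ) ≤ (majCount (permArray k P) lo hi2 x : ℝ) := by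
      exact_mod_cast hcard
    have hle : hi2 + 1 ≤ lo + 4*k := by omega
    have hleR : ((hi2:ℝ)) + 1 ≤ (lo:ℝ) + 4*(k:ℝ) := by exact_mod_cast hle
    have hlt2 : (1/(2*(k:ℝ)+2)) * ((hi2:ℝ) - lo + 1) < 2 := by
      rw [div_mul_eq_mul_div, one_mul, div_lt_iff₀ hden]
      linarith
    linarith

/-- The map sending a sequence of `m` permutations of `{1,…,3k}` to the function
assigning to each range `[i,j] ⊆ [1, 36km]` the number of distinct `τ`-majorities of
`A_Π[i,j]`, with `τ = 1/(2k+2)`, is injective. -/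
theorem stmt0 (k m : ℕ) (hk : 1 ≤ k) (hm : 1 ≤ m)
    (P P' : ℕ → ℕ → ℕ)
    (hP : ∀ i ∈ Finset.Icc 1 m, Set.BijOn (P i) (Set.Icc 1 (3 * k)) (Set.Icc 1 (3 * k)))
    (hP' : ∀ i ∈ Finset.Icc 1 m, Set.BijOn (P' i) (Set.Icc 1 (3 * k)) (Set.Icc 1 (3 * k)))
    (heq : ∀ i j : ℕ, 1 ≤ i → i ≤ j → j ≤ 36 * k * m →
      majNum ((1 : ℝ) / (2 * k + 2)) (permArray k P) i j =
      majNum ((1 : ℝ) / (2 * k + 2)) (permArray k P') i j) :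
    ∀ i ∈ Finset.Icc 1 m, ∀ t ∈ Finset.Icc 1 (3 * k), P i t = P' i t := by

  intro i hii t htt
  simp only [Finset.mem_Icc] at hii htt
  obtain ⟨a, s, ha, hs1, hs2, hts⟩ := decomp k t hk htt.1 htt.2
  have hPi := hP i (by simp only [Finset.mem_Icc]; exact hii)
  have hP'i := hP' i (by simp only [Finset.mem_Icc]; exact hii)
  have hPit := hPi.mapsTo (Set.mem_Icc.mpr htt)
  have hP'it := hP'i.mapsTo (Set.mem_Icc.mpr htt)
  have hNeq : ∀ b r, b ≤ 2 → 1 ≤ r → r ≤ k → ∀ s', s' ≤ s →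
      ((Finset.Icc 1 s').filter
        (fun u => b*k+r ≤ P i (a*k+u) ∧ P i (a*k+u) ≤ b*k+k)).card =
      ((Finset.Icc 1 s').filter
        (fun u => b*k+r ≤ P' i (a*k+u) ∧ P' i (a*k+u) ≤ b*k+k)).card := by
    intro b r hb hr1 hr2 s' hs'
    rcases Nat.eq_zero_or_pos s' with h0 | h0
    · subst h0; simp
    · have hbound1 : 1 ≤ 36*k*(i-1) + 4*k*(3*a+b) + r := by omega
      have hbound2 : 36*k*(i-1) + 4*k*(3*a+b) + r ≤
          36*k*(i-1) + 4*k*(3*a+b) + (3*k+s') := by omega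
      have hbound3 : 36*k*(i-1) + 4*k*(3*a+b) + (3*k+s') ≤ 36*k*m := by
        obtain ⟨i', rfl⟩ : ∃ i', i = i'+1 := ⟨i-1, by omega⟩
        have h8 : 3*a+b ≤ 8 := by omega
        have h32 : 4*k*(3*a+b) ≤ 4*k*8 := Nat.mul_le_mul_left _ h8
        have him : 36*k*(i'+1) ≤ 36*k*m := Nat.mul_le_mul_left _ hii.2
        have h36 : 36*k*(i'+1) = 36*k*i' + 36*k := by ring
        have hsimp : i'+1 - 1 = i' := by omega
        rw [hsimp]
        omega
      have e1 := majNum_eq k hk P i a b s' r hii.1 ha hb h0 (by omega) hr1 hr2 hPi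
      have e2 := majNum_eq k hk P' i a b s' r hii.1 ha hb h0 (by omega) hr1 hr2 hP'i
      have e3 := heq _ _ hbound1 hbound2 hbound3
      rw [← e1, ← e2]
      exact e3
  have hIcc : Finset.Icc 1 s = insert s (Finset.Icc 1 (s-1)) := by
    ext y; simp only [Finset.mem_insert, Finset.mem_Icc]; omega
  have hkey : ∀ b r, b ≤ 2 → 1 ≤ r → r ≤ k →
      ((b*k+r ≤ P i t ∧ P i t ≤ b*k+k) ↔ (b*k+r ≤ P' i t ∧ P' i t ≤ b*k+k)) := by
    intro b r hb hr1 hr2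
    have e1 := hNeq b r hb hr1 hr2 s le_rfl
    have e2 := hNeq b r hb hr1 hr2 (s-1) (by omega)
    rw [hIcc, Finset.filter_insert, Finset.filter_insert] at e1
    have hnotP : s ∉ (Finset.Icc 1 (s-1)).filter
        (fun u => b*k+r ≤ P i (a*k+u) ∧ P i (a*k+u) ≤ b*k+k) := by
      intro hmem
      have := Finset.mem_Icc.mp (Finset.filter_subset _ _ hmem)
      omega
    have hnotP' : s ∉ (Finset.Icc 1 (s-1)).filter
        (fun u => b*k+r ≤ P' i (a*k+u) ∧ P' i (a*k+u) ≤ b*k+k) := by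
      intro hmem
      have := Finset.mem_Icc.mp (Finset.filter_subset _ _ hmem)
      omega
    rw [hts]
    by_cases c1 : b*k+r ≤ P i (a*k+s) ∧ P i (a*k+s) ≤ b*k+k <;>
      by_cases c2 : b*k+r ≤ P' i (a*k+s) ∧ P' i (a*k+s) ≤ b*k+k
    · tauto
    · exfalso
      rw [if_pos c1, if_neg c2, Finset.card_insert_of_notMem hnotP] at e1
      omega
    · exfalso
      rw [if_neg c1, if_pos c2, Finset.card_insert_of_notMem hnotP'] at e1
      omega
    · tauto
  obtain ⟨b1, j1, hb1, hj11, hj12, hv1⟩ := decomp k (P i t) hk hPit.1 hPit.2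
  obtain ⟨b2, j2, hb2, hj21, hj22, hv2⟩ := decomp k (P' i t) hk hP'it.1 hP'it.2
  have h1 := (hkey b1 j1 hb1 hj11 hj12).mp ⟨by omega, by omega⟩
  have h2 := (hkey b2 j2 hb2 hj21 hj22).mpr ⟨by omega, by omega⟩
  omega
end

section
/- Let m ≥ 1 and let B : {1, …, m} → {0, 1} be a bitmap. Define the array A_B of length 4m over {1, 2, 3, 4} by: if B(i) = 1 then (A_B(4(i−1)+1), A_B(4(i−1)+2), A_B(4(i−1)+3), A_B(4i)) = (1, 1, 1, 1), and if B(i) = 0 then it equals (1, 2, 3, 4). Then for every real τ with 1/4 ≤ τ < 1 and every i ∈ {1, …, m}, the range A_B[4(i−1)+1, 4i] has a τ-majority if and only if B(i) = 1. Consequently, for any fixed such τ, the map sending B to the function assigning to every pair (i, j) with 1 ≤ i ≤ j ≤ 4m whether A_B[i, j] has a τ-majority is injective on {0,1}^m. -/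
open scoped Classical

/-- The array `A_B` of length `4m` encoding a bitmap `B : {1,…,m} → {0,1}`:
the `i`-th group of four positions holds `(1,1,1,1)` if `B i = 1` and `(1,2,3,4)`
if `B i = 0`. -/
def bitArray (B : ℕ → ℕ) : ℕ → ℕ := fun p =>
  if B ((p - 1) / 4 + 1) = 1 then 1 else (p - 1) % 4 + 1

lemma group_iff (τ : ℝ) (hτ1 : 1 / 4 ≤ τ) (hτ2 : τ < 1) (B : ℕ → ℕ) (n : ℕ)
    (hB : B (n + 1) = 0 ∨ B (n + 1) = 1) :
    (∃ x : ℕ, IsMaj τ (bitArray B) (4 * n + 1) (4 * n + 4) x) ↔ B (n + 1) = 1 := by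
  have hlen : ((4 * n + 4 : ℕ) : ℝ) - ((4 * n + 1 : ℕ) : ℝ) + 1 = 4 := by push_cast; ring
  constructor
  · rintro ⟨x, hx⟩
    by_contra h
    have hB0 : B (n + 1) = 0 := hB.resolve_right h
    have hval : ∀ p, 4 * n + 1 ≤ p → p ≤ 4 * n + 4 → bitArray B p = (p - 1) % 4 + 1 := by
      intro p hp1 hp2
      have hdiv : (p - 1) / 4 + 1 = n + 1 := by omega
      simp [bitArray, hdiv, hB0]
    have hcard : majCount (bitArray B) (4 * n + 1) (4 * n + 4) x ≤ 1 := by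
      apply Finset.card_le_one.mpr
      intro p hp q hq
      simp only [majCount, Finset.mem_filter, Finset.mem_Icc] at hp hq
      rw [hval p hp.1.1 hp.1.2] at hp
      rw [hval q hq.1.1 hq.1.2] at hq
      omega
    have hcard' : (majCount (bitArray B) (4 * n + 1) (4 * n + 4) x : ℝ) ≤ 1 := by
      exact_mod_cast hcard
    rw [IsMaj, hlen] at hx
    linarith
  · intro h1
    refine ⟨1, ?_⟩
    have hval : ∀ p ∈ Finset.Icc (4 * n + 1) (4 * n + 4), bitArray B p = 1 := by
      intro p hp
      simp only [Finset.mem_Icc] at hp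
      have hdiv : (p - 1) / 4 + 1 = n + 1 := by omega
      simp [bitArray, hdiv, h1]
    have hcount : majCount (bitArray B) (4 * n + 1) (4 * n + 4) 1 = 4 := by
      have : majCount (bitArray B) (4 * n + 1) (4 * n + 4) 1
          = (Finset.Icc (4 * n + 1) (4 * n + 4)).card := by
        unfold majCount
        congr 1
        rw [Finset.filter_congr_decidable]
        exact Finset.filter_true_of_mem hval
      rw [this, Nat.card_Icc]
      omega
    rw [IsMaj, hlen, hcount]
    push_cast
    nlinarith

/-- For every `1/4 ≤ τ < 1`, the group `A_B[4(i-1)+1, 4i]` has a `τ`-majority iff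
`B i = 1`; consequently, the map sending `B` to the function telling whether each
range `A_B[i,j]` has a `τ`-majority is injective on bitmaps. -/
theorem stmt1 (m : ℕ) (hm : 1 ≤ m) (τ : ℝ) (hτ1 : 1 / 4 ≤ τ) (hτ2 : τ < 1) :
    (∀ B : ℕ → ℕ, (∀ i ∈ Finset.Icc 1 m, B i = 0 ∨ B i = 1) →
      ∀ i ∈ Finset.Icc 1 m,
        ((∃ x : ℕ, IsMaj τ (bitArray B) (4 * (i - 1) + 1) (4 * i) x) ↔ B i = 1)) ∧
    (∀ B B' : ℕ → ℕ,
      (∀ i ∈ Finset.Icc 1 m, B i = 0 ∨ B i = 1) →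
      (∀ i ∈ Finset.Icc 1 m, B' i = 0 ∨ B' i = 1) →
      (∀ i j : ℕ, 1 ≤ i → i ≤ j → j ≤ 4 * m →
        ((∃ x : ℕ, IsMaj τ (bitArray B) i j x) ↔
          (∃ x : ℕ, IsMaj τ (bitArray B') i j x))) →
      ∀ i ∈ Finset.Icc 1 m, B i = B' i) := by
  have key : ∀ B : ℕ → ℕ, (∀ i ∈ Finset.Icc 1 m, B i = 0 ∨ B i = 1) →
      ∀ i ∈ Finset.Icc 1 m,
        ((∃ x : ℕ, IsMaj τ (bitArray B) (4 * (i - 1) + 1) (4 * i) x) ↔ B i = 1) := by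
    intro B hB i hi
    simp only [Finset.mem_Icc] at hi
    obtain ⟨n, rfl⟩ : ∃ n, i = n + 1 := ⟨i - 1, by omega⟩
    have e1 : 4 * (n + 1 - 1) + 1 = 4 * n + 1 := by omega
    have e2 : 4 * (n + 1) = 4 * n + 4 := by omega
    rw [e1, e2]
    exact group_iff τ hτ1 hτ2 B n (hB (n + 1) (by simp [Finset.mem_Icc]; omega))
  refine ⟨key, ?_⟩
  intro B B' hB hB' heq i hi
  have hi' := hi
  simp only [Finset.mem_Icc] at hi'
  have h1 := key B hB i hi
  have h2 := key B' hB' i hi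
  have e1 : 4 * (i - 1) + 1 ≥ 1 := by omega
  have e2 : 4 * (i - 1) + 1 ≤ 4 * i := by omega
  have e3 : 4 * i ≤ 4 * m := by omega
  have h3 := heq (4 * (i - 1) + 1) (4 * i) e1 e2 e3
  have h4 := hB i hi
  have h5 := hB' i hi
  have : B i = 1 ↔ B' i = 1 := by rw [← h1, ← h2]; exact h3
  omega
end

section
/- Let 0 < τ < 1 be real and A a sequence of length n over an arbitrary type. For every value x, the number of positions in Cov_τ(x) satisfies |Cov_τ(x)| ≤ 2·⌈1/τ⌉·occ(x), where occ(x) = #{k : 1 ≤ k ≤ n, A(k) = x}. -/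
open scoped Classical

/-- The finite set of positions `k ∈ {1,…,n}` lying in at least one interval
`[i,j] ⊆ {1,…,n}` in which `x` is a `τ`-majority. -/
noncomputable def CovF {α : Type*} (τ : ℝ) (A : ℕ → α) (n : ℕ) (x : α) : Finset ℕ :=
  (Finset.Icc 1 n).filter
    (fun k => ∃ i j : ℕ, 1 ≤ i ∧ i ≤ j ∧ j ≤ n ∧ i ≤ k ∧ k ≤ j ∧ IsMaj τ A i j x)

/-- Running minimum of `g` over `[0,N]`. -/
noncomputable def muF (g : ℕ → ℤ) : ℕ → ℤ
  | 0 => g 0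
  | (t+1) => min (muF g t) (g (t+1))

lemma muF_le (g : ℕ → ℤ) : ∀ {m N : ℕ}, m ≤ N → muF g N ≤ g m := by
  intro m N
  induction N with
  | zero => intro h; interval_cases m; simp [muF]
  | succ N ih =>
    intro h
    rcases Nat.lt_or_ge m (N+1) with h'|h'
    · exact le_trans (min_le_left _ _) (ih (Nat.lt_succ_iff.mp h'))
    · have : m = N+1 := le_antisymm h h'
      subst this; exact min_le_right _ _

lemma muF_le_self (g : ℕ → ℤ) (N : ℕ) : muF g N ≤ g N := muF_le g le_rfl

lemma exists_muF (g : ℕ → ℤ) : ∀ N, ∃ m ≤ N, muF g N = g m := by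
  intro N
  induction N with
  | zero => exact ⟨0, le_rfl, rfl⟩
  | succ N ih =>
    rcases ih with ⟨m, hm, hmu⟩
    rcases le_or_gt (muF g N) (g (N+1)) with h|h
    · refine ⟨m, le_trans hm (Nat.le_succ _), ?_⟩
      show min (muF g N) (g (N+1)) = g m
      rw [min_eq_left h, hmu]
    · refine ⟨N+1, le_rfl, ?_⟩
      show min (muF g N) (g (N+1)) = g (N+1)
      rw [min_eq_right h.le]

/-- Key counting lemma: for an integer path `g` with steps `C*u(t) - 1` where `u`
is a 0/1 indicator, the number of positions `s ∈ [1,N]` strictly exceeding some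
earlier value of the path is at most `C * (number of up-steps)`. -/
lemma genA (C : ℕ) (hC : 2 ≤ C) (g : ℕ → ℤ) (u : ℕ → ℕ) (hu : ∀ t, u t ≤ 1)
    (N : ℕ) (hstep : ∀ t < N, g (t+1) - g t = C * u (t+1) - 1) :
    (((Finset.Icc 1 N).filter (fun s => ∃ m < s, g m < g s)).card : ℤ)
      ≤ C * ∑ t ∈ Finset.Icc 1 N, (u t : ℤ) := by
  have key : ∀ M : ℕ, M ≤ N →
      (((Finset.Icc 1 M).filter (fun s => ∃ m < s, g m < g s)).card : ℤ)
        + (g M - muF g M) ≤ C * ∑ t ∈ Finset.Icc 1 M, (u t : ℤ) := by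
    intro M
    induction M with
    | zero => intro _; simp [muF]
    | succ M ihM =>
      intro hMN
      have ih := ihM (by omega)
      have hIcc : Finset.Icc 1 (M+1) = insert (M+1) (Finset.Icc 1 M) := by
        ext t; simp [Finset.mem_Icc, Finset.mem_insert]; omega
      have hnotmem : M+1 ∉ Finset.Icc 1 M := by simp
      have hsum : ∑ t ∈ Finset.Icc 1 (M+1), (u t : ℤ)
          = (u (M+1) : ℤ) + ∑ t ∈ Finset.Icc 1 M, (u t : ℤ) := by
        rw [hIcc, Finset.sum_insert hnotmem]
      have hstepM := hstep M (by omega)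
      have hΦ : (0:ℤ) ≤ g M - muF g M := sub_nonneg.mpr (muF_le_self g M)
      have hbadiff : (∃ m < M+1, g m < g (M+1)) ↔ muF g M < g (M+1) := by
        constructor
        · rintro ⟨m, hm, hlt⟩
          exact lt_of_le_of_lt (muF_le g (Nat.lt_succ_iff.mp hm)) hlt
        · intro h
          rcases exists_muF g M with ⟨m, hm, hmu⟩
          exact ⟨m, Nat.lt_succ_of_le hm, hmu ▸ h⟩
      have hfilter : ((Finset.Icc 1 (M+1)).filter (fun s => ∃ m < s, g m < g s))
          = if (∃ m < M+1, g m < g (M+1))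
            then insert (M+1) ((Finset.Icc 1 M).filter (fun s => ∃ m < s, g m < g s))
            else ((Finset.Icc 1 M).filter (fun s => ∃ m < s, g m < g s)) := by
        rw [hIcc, Finset.filter_insert]
      have hCdist : (C:ℤ) * ((u (M+1) : ℤ) + ∑ t ∈ Finset.Icc 1 M, (u t : ℤ))
          = (C:ℤ) * (u (M+1):ℤ) + (C:ℤ) * ∑ t ∈ Finset.Icc 1 M, (u t : ℤ) := by ring
      by_cases hb : (∃ m < M+1, g m < g (M+1))
      · rw [hfilter, if_pos hb, hsum, hCdist]
        rw [Finset.card_insert_of_notMem (by simp [hnotmem])]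
        have hlt := hbadiff.mp hb
        have hmin : muF g (M+1) = muF g M := by
          show min (muF g M) (g (M+1)) = muF g M
          rw [min_eq_left hlt.le]
        rw [hmin]
        push_cast
        rcases Nat.le_one_iff_eq_zero_or_eq_one.mp (hu (M+1)) with h0|h1
        · have hg : g (M+1) = g M - 1 := by rw [h0] at hstepM; push_cast at hstepM; omega
          rw [h0, hg]; push_cast; omega
        · have hg : g (M+1) = g M + ((C:ℤ) - 1) := by
            rw [h1] at hstepM; push_cast at hstepM; omega
          rw [h1, hg]; push_cast; omega
      · rw [hfilter, if_neg hb, hsum, hCdist]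
        have hle := not_lt.mp (fun h => hb (hbadiff.mpr h))
        have hmin : muF g (M+1) = g (M+1) := by
          show min (muF g M) (g (M+1)) = g (M+1)
          rw [min_eq_right hle]
        rw [hmin]
        have hu' : (0:ℤ) ≤ (C:ℤ) * (u (M+1) : ℤ) := by positivity
        omega
  have hk := key N le_rfl
  have hΦ : (0:ℤ) ≤ g N - muF g N := sub_nonneg.mpr (muF_le_self g N)
  omega

section aux
variable {α : Type*} (A : ℕ → α) (x : α)

lemma Pc_succ (t : ℕ) :
    majCount A 1 (t+1) x = majCount A 1 t x + (if A (t+1) = x then 1 else 0) := by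
  unfold majCount
  have hIcc : Finset.Icc 1 (t+1) = insert (t+1) (Finset.Icc 1 t) := by
    ext s; simp [Finset.mem_Icc, Finset.mem_insert]; omega
  rw [hIcc, Finset.filter_insert]
  by_cases h : A (t+1) = x
  · rw [if_pos h, if_pos h, Finset.card_insert_of_notMem (by simp)]
  · rw [if_neg h, if_neg h, add_zero]

lemma Pc_split (i j : ℕ) (h1 : 1 ≤ i) (hij : i ≤ j) :
    majCount A 1 (i-1) x + majCount A i j x = majCount A 1 j x := by
  unfold majCount
  have hIcc : Finset.Icc 1 j = Finset.Icc 1 (i-1) ∪ Finset.Icc i j := by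
    ext s; simp [Finset.mem_Icc, Finset.mem_union]; omega
  have hdisj : Disjoint ((Finset.Icc 1 (i-1)).filter (fun k => A k = x))
      ((Finset.Icc i j).filter (fun k => A k = x)) := by
    apply Finset.disjoint_filter_filter
    rw [Finset.disjoint_left]
    intro a ha ha'
    simp [Finset.mem_Icc] at ha ha'
    omega
  rw [hIcc, Finset.filter_union, Finset.card_union_of_disjoint hdisj]

lemma Pc_eq_sum (N : ℕ) :
    majCount A 1 N x = ∑ t ∈ Finset.Icc 1 N, (if A t = x then 1 else 0) := by
  unfold majCount
  rw [Finset.card_filter]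

end aux

/-- `|Cov_τ(x)| ≤ 2⌈1/τ⌉ · occ(x)`. -/
theorem stmt4 {α : Type*} (τ : ℝ) (hτ0 : 0 < τ) (hτ1 : τ < 1)
    (A : ℕ → α) (n : ℕ) (x : α) :
    (CovF τ A n x).card ≤ 2 * ⌈(1 : ℝ) / τ⌉₊ * majCount A 1 n x := by
  classical
  set C : ℕ := ⌈(1 : ℝ) / τ⌉₊ with hCdef
  have hC2 : 2 ≤ C := by
    have h1 : (1:ℝ) < 1/τ := by
      rw [lt_div_iff₀ hτ0]; linarith
    have := Nat.lt_ceil.mpr (by exact_mod_cast h1 : ((1:ℕ) : ℝ) < 1/τ)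
    omega
  set u : ℕ → ℕ := fun t => if A t = x then 1 else 0 with hudef
  have hu : ∀ t, u t ≤ 1 := by intro t; simp only [hudef]; split <;> omega
  set ph : ℕ → ℤ := fun t => (C : ℤ) * (majCount A 1 t x : ℤ) - t with hphdef
  have hstep : ∀ t, ph (t+1) - ph t = (C:ℤ) * u (t+1) - 1 := by
    intro t
    simp only [hphdef, hudef]
    rw [Pc_succ A x t]
    by_cases hAx : A (t+1) = x
    · rw [if_pos hAx]; push_cast; ring
    · rw [if_neg hAx]; push_cast; ring
  -- key witness inequality
  have hwit : ∀ i j : ℕ, 1 ≤ i → i ≤ j → IsMaj τ A i j x → ph (i-1) + 1 ≤ ph j := by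
    intro i j h1 hij hmaj
    have hmlen : (j - i + 1 : ℕ) < C * majCount A i j x := by
      have hC : (1:ℝ)/τ ≤ (C:ℝ) := Nat.le_ceil _
      have hcast : (((j - i + 1 : ℕ)) : ℝ) = (j:ℝ) - (i:ℝ) + 1 := by
        push_cast [hij]; ring
      have hpos : (0:ℝ) < (j:ℝ) - (i:ℝ) + 1 := by
        rw [← hcast]; exact_mod_cast Nat.succ_pos _
      have hmpos : (0:ℝ) < (majCount A i j x : ℝ) :=
        lt_of_le_of_lt (by positivity) hmaj
      have : ((j - i + 1 : ℕ) : ℝ) < (C:ℝ) * (majCount A i j x : ℝ) := by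
        rw [hcast]
        calc (j:ℝ) - (i:ℝ) + 1 = (1/τ) * (τ * ((j:ℝ) - (i:ℝ) + 1)) := by
              field_simp
          _ < (1/τ) * (majCount A i j x : ℝ) := by
              apply mul_lt_mul_of_pos_left hmaj (by positivity)
          _ ≤ (C:ℝ) * (majCount A i j x : ℝ) :=
              mul_le_mul_of_nonneg_right hC hmpos.le
      exact_mod_cast this
    have hsplit := Pc_split A x i j h1 hij
    have h2 : (C:ℤ) * (majCount A 1 (i-1) x : ℤ) + (C:ℤ) * (majCount A i j x : ℤ)
        = (C:ℤ) * (majCount A 1 j x : ℤ) := by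
      rw [← mul_add]; congr 1; exact_mod_cast hsplit
    have hmlen' : ((j:ℤ) - (i:ℤ) + 1) < (C:ℤ) * (majCount A i j x : ℤ) := by
      have hcast2 : (((j - i + 1 : ℕ)) : ℤ) = (j:ℤ) - (i:ℤ) + 1 := by
        push_cast [hij]; ring
      calc ((j:ℤ) - (i:ℤ) + 1) = ((j - i + 1 : ℕ) : ℤ) := hcast2.symm
        _ < ((C * majCount A i j x : ℕ) : ℤ) := by exact_mod_cast hmlen
        _ = (C:ℤ) * (majCount A i j x : ℤ) := by push_cast; ring
    have hi1 : ((i-1:ℕ):ℤ) = (i:ℤ) - 1 := by omega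
    simp only [hphdef]
    rw [hi1]
    linarith [h2, hmlen']
  -- the two bad sets
  set SL : Finset ℕ := (Finset.Icc 1 n).filter (fun s => ∃ m < s, ph m < ph s) with hSLdef
  set g' : ℕ → ℤ := fun t => -(ph (n - t)) with hg'def
  set SR : Finset ℕ := (Finset.Icc 1 n).filter (fun s => ∃ m < s, g' m < g' s) with hSRdef
  set u' : ℕ → ℕ := fun t => u (n + 1 - t) with hu'def
  have hsumu : ∑ t ∈ Finset.Icc 1 n, (u t : ℤ) = (majCount A 1 n x : ℤ) := by
    rw [Pc_eq_sum A x n]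
    push_cast
    exact Finset.sum_congr rfl (fun t _ => by simp [hudef])
  have hSLcard : (SL.card : ℤ) ≤ (C:ℤ) * (majCount A 1 n x : ℤ) := by
    rw [hSLdef, ← hsumu]
    exact genA C hC2 ph u hu n (fun t _ => hstep t)
  have hSRcard : (SR.card : ℤ) ≤ (C:ℤ) * (majCount A 1 n x : ℤ) := by
    have hstep' : ∀ t < n, g' (t+1) - g' t = (C:ℤ) * u' (t+1) - 1 := by
      intro t ht
      have h1 : n - t = (n - (t+1)) + 1 := by omega
      have h2 : n + 1 - (t+1) = (n - (t+1)) + 1 := by omega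
      simp only [hg'def, hu'def]
      rw [h2, h1]
      have := hstep (n - (t+1))
      omega
    have hsumu' : ∑ t ∈ Finset.Icc 1 n, (u' t : ℤ) = ∑ t ∈ Finset.Icc 1 n, (u t : ℤ) := by
      simp only [hu'def]
      apply Finset.sum_nbij' (i := fun t => n + 1 - t) (j := fun t => n + 1 - t) <;>
          intro a ha <;> simp [Finset.mem_Icc] at ha ⊢ <;>
        first
          | omega
          | (congr 2; omega)
    rw [hSRdef, ← hsumu, ← hsumu']
    exact genA C hC2 g' u' (fun t => hu _) n hstep'
  -- every covered position lands in SL (shifted) or SR (reflected)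
  have hcov : ∀ k ∈ CovF τ A n x, (k - 1 ∈ SL) ∨ (n + 1 - k ∈ SR) := by
    intro k hk
    rw [CovF, Finset.mem_filter] at hk
    obtain ⟨hkIcc, i, j, h1i, hij, hjn, hik, hkj, hmaj⟩ := hk
    rw [Finset.mem_Icc] at hkIcc
    have hw := hwit i j h1i hij hmaj
    by_cases hL : ph (i-1) < ph (k-1)
    · left
      rw [hSLdef, Finset.mem_filter, Finset.mem_Icc]
      have hne : i - 1 ≠ k - 1 := fun he => absurd hL (by rw [he]; exact lt_irrefl _)
      refine ⟨⟨by omega, by omega⟩, ⟨i-1, by omega, hL⟩⟩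
    · right
      rw [hSRdef, Finset.mem_filter, Finset.mem_Icc]
      push_neg at hL
      have hklt : ph (k-1) < ph j := by omega
      refine ⟨⟨by omega, by omega⟩, ⟨n - j, by omega, ?_⟩⟩
      simp only [hg'def]
      have e1 : n - (n - j) = j := by omega
      have e2 : n - (n + 1 - k) = k - 1 := by omega
      rw [e1, e2]
      omega
  -- split CovF and inject each part
  have hcard : (CovF τ A n x).card ≤ SL.card + SR.card := by
    have hpart := Finset.card_filter_add_card_filter_not
      (s := CovF τ A n x) (p := fun k => k - 1 ∈ SL)
    have hL : ((CovF τ A n x).filter (fun k => k - 1 ∈ SL)).card ≤ SL.card := by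
      apply Finset.card_le_card_of_injOn (fun k => k - 1)
      · intro k hk
        exact (Finset.mem_filter.mp hk).2
      · intro a ha b hb hab
        have hab' : a - 1 = b - 1 := hab
        have ha' := Finset.mem_Icc.mp (Finset.mem_filter.mp
          ((Finset.mem_filter.mp ha).1 : a ∈ CovF τ A n x)).1
        have hb' := Finset.mem_Icc.mp (Finset.mem_filter.mp
          ((Finset.mem_filter.mp hb).1 : b ∈ CovF τ A n x)).1
        omega
    have hR : ((CovF τ A n x).filter (fun k => ¬(k - 1 ∈ SL))).card ≤ SR.card := by
      apply Finset.card_le_card_of_injOn (fun k => n + 1 - k)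
      · intro k hk
        have hk' := Finset.mem_filter.mp hk
        rcases hcov k hk'.1 with h|h
        · exact absurd h hk'.2
        · exact h
      · intro a ha b hb hab
        have hab' : n + 1 - a = n + 1 - b := hab
        have ha' := Finset.mem_Icc.mp (Finset.mem_filter.mp
          ((Finset.mem_filter.mp ha).1 : a ∈ CovF τ A n x)).1
        have hb' := Finset.mem_Icc.mp (Finset.mem_filter.mp
          ((Finset.mem_filter.mp hb).1 : b ∈ CovF τ A n x)).1
        omega
    omega
  have hfin : ((CovF τ A n x).card : ℤ) ≤ 2 * (C:ℤ) * (majCount A 1 n x : ℤ) := by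
    have : ((CovF τ A n x).card : ℤ) ≤ (SL.card : ℤ) + (SR.card : ℤ) := by
      exact_mod_cast hcard
    linarith
  exact_mod_cast hfin
end

section
/- Let 0 < τ < 1 be real and A a sequence of length n ≥ 1 over an arbitrary type. Then for every position k ∈ {1, …, n}, the number of distinct values x such that k ∈ Cov_τ(x) is at most 2·log(4n)/log(1+τ). -/
open scoped Classical

/-- `Cov τ A n x`: the set of positions `k ∈ {1,…,n}` lying in at least one interval
`[i,j] ⊆ {1,…,n}` in which `x` is a `τ`-majority. -/
def Cov {α : Type*} (τ : ℝ) (A : ℕ → α) (n : ℕ) (x : α) : Set ℕ :=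
  {k | ∃ i j : ℕ, 1 ≤ i ∧ i ≤ j ∧ j ≤ n ∧ i ≤ k ∧ k ≤ j ∧ IsMaj τ A i j x}


/-!
Fix a witness interval `[i x, j x] ∋ k` for every value `x` covering `k`, of length `ℓ x`, in
which `x` occurs `w x > τ ℓ x` times. Occurrences of distinct values are disjoint and all
intervals of length at most `L` through `k` lie in a window of `2L - 1` positions, so the total
count of those values is below `2L`. Adding the values in order of increasing `ℓ`, the new value
`a` has `w a > τ ℓ a ≥ τ (S + 1) / 2` where `S` is the count so far, hence `S + 1` grows by a
factor `1 + τ/2` at each step. With `S + 1 ≤ 2n` at the end and `1 + τ ≤ (1 + τ/2)²` this gives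
`(1 + τ)^c ≤ (2n)²` for `c` covering values.
-/

open Finset

section

variable {α : Type*}

lemma sum_majCount_lt_two_mul (A : ℕ → α) (F : Finset α) (i j : α → ℕ) {k L : ℕ} (hL : 0 < L)
    (hk : ∀ x ∈ F, i x ≤ k ∧ k ≤ j x) (hlen : ∀ x ∈ F, j x + 1 - i x ≤ L) :
    ∑ x ∈ F, majCount A (i x) (j x) x < 2 * L := by
  set occ : α → Finset ℕ := fun x => {p ∈ Icc (i x) (j x) | A p = x}
  have hdisj : (F : Set α).PairwiseDisjoint occ := by
    intro x _ y _ hxy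
    refine Finset.disjoint_left.2 fun p hpx hpy => hxy ?_
    exact (mem_filter.1 hpx).2.symm.trans (mem_filter.1 hpy).2
  have hwindow : F.biUnion occ ⊆ Ico (k + 1 - L) (k + L) := by
    refine biUnion_subset.2 fun x hx p hp => ?_
    have := hk x hx
    have := hlen x hx
    simp only [occ, mem_filter, mem_Icc] at hp
    rw [mem_Ico]
    omega
  calc ∑ x ∈ F, majCount A (i x) (j x) x = #(F.biUnion occ) := (card_biUnion hdisj).symm
    _ ≤ #(Ico (k + 1 - L) (k + L)) := card_le_card hwindow
    _ < 2 * L := by rw [Nat.card_Ico]; omega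

lemma IsMaj.mul_length_lt {τ : ℝ} {A : ℕ → α} {i j : ℕ} {x : α} (hij : i ≤ j)
    (h : IsMaj τ A i j x) : τ * ((j + 1 - i : ℕ) : ℝ) < majCount A i j x := by
  rwa [Nat.cast_sub (by omega), Nat.cast_add, Nat.cast_one, add_sub_right_comm]

lemma IsMaj.exists_eq {τ : ℝ} (hτ : 0 ≤ τ) {A : ℕ → α} {i j : ℕ} {x : α} (hij : i ≤ j)
    (h : IsMaj τ A i j x) : ∃ p ∈ Icc i j, A p = x := by
  have hpos : 0 < majCount A i j x := by
    exact_mod_cast (mul_nonneg hτ (Nat.cast_nonneg _)).trans_lt (h.mul_length_lt hij)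
  obtain ⟨p, hp⟩ := card_pos.1 hpos
  exact ⟨p, (mem_filter.1 hp).1, (mem_filter.1 hp).2⟩

lemma setOf_mem_Cov_finite {τ : ℝ} (hτ : 0 ≤ τ) (A : ℕ → α) (n k : ℕ) :
    {x | k ∈ Cov τ A n x}.Finite := by
  refine ((Set.finite_Icc 1 n).image A).subset fun x ⟨i, j, hi, hij, hj, _, _, hmaj⟩ => ?_
  obtain ⟨p, hp, rfl⟩ := hmaj.exists_eq hτ hij
  have := mem_Icc.1 hp
  exact ⟨p, Set.mem_Icc.2 ⟨by omega, by omega⟩, rfl⟩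

end

lemma pow_card_le_sum_add_one {ι : Type*} {τ : ℝ} (hτ : 0 ≤ τ) (F : Finset ι)
    (ℓ w : ι → ℝ) (hmaj : ∀ a ∈ F, τ * ℓ a ≤ w a)
    (hpack : ∀ a ∈ F, ∀ s ⊆ F, (∀ x ∈ s, ℓ x ≤ ℓ a) → ∑ x ∈ s, w x + 1 ≤ 2 * ℓ a) :
    (1 + τ / 2) ^ #F ≤ ∑ x ∈ F, w x + 1 := by
  induction F using Finset.induction_on_max_value ℓ with
  | empty => simp
  | insert a s ha hmax ih =>
    have hs := ih (fun x hx => hmaj x (mem_insert_of_mem hx))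
      fun b hb t ht => hpack b (mem_insert_of_mem hb) t (ht.trans (subset_insert a s))
    have hpa := hpack a (mem_insert_self a s) s (subset_insert a s) hmax
    have hwa := hmaj a (mem_insert_self a s)
    rw [card_insert_of_notMem ha, sum_insert ha, pow_succ]
    calc (1 + τ / 2) ^ #s * (1 + τ / 2) ≤ (∑ x ∈ s, w x + 1) * (1 + τ / 2) := by gcongr
      _ ≤ w a + ∑ x ∈ s, w x + 1 := by nlinarith

lemma natCast_mul_log_le_of_pow_le {τ M : ℝ} (hτ : 0 ≤ τ) {c : ℕ} (h : (1 + τ / 2) ^ c ≤ M) :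
    c * Real.log (1 + τ) ≤ 2 * Real.log M := by
  have hsq : 1 + τ ≤ (1 + τ / 2) ^ 2 := by nlinarith
  have hpow : (1 + τ) ^ c ≤ M ^ 2 :=
    calc (1 + τ) ^ c ≤ ((1 + τ / 2) ^ 2) ^ c := by gcongr
      _ = ((1 + τ / 2) ^ c) ^ 2 := by rw [← pow_mul, ← pow_mul, mul_comm]
      _ ≤ M ^ 2 := by gcongr
  calc c * Real.log (1 + τ) = Real.log ((1 + τ) ^ c) := (Real.log_pow _ _).symm
    _ ≤ Real.log (M ^ 2) := Real.log_le_log (by positivity) hpow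
    _ = 2 * Real.log M := by rw [Real.log_pow]; norm_num

theorem stmt6_general {α : Type*} (τ : ℝ) (hτ0 : 0 < τ)
    (A : ℕ → α) (n : ℕ) (hn : 1 ≤ n) (k : ℕ) :
    ({x : α | k ∈ Cov τ A n x}.ncard : ℝ) ≤
      2 * Real.log (4 * n) / Real.log (1 + τ) := by
  set S := {x : α | k ∈ Cov τ A n x}
  have hS : S.Finite := setOf_mem_Cov_finite hτ0.le A n k
  choose! i j hcov using fun x (hx : x ∈ S) => hx
  set F := hS.toFinset
  set w : α → ℕ := fun x => majCount A (i x) (j x) x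
  set ℓ : α → ℕ := fun x => j x + 1 - i x
  have hk : ∀ x ∈ F, i x ≤ k ∧ k ≤ j x := fun x hx => by
    obtain ⟨-, -, -, hik, hkj, -⟩ := hcov x (hS.mem_toFinset.1 hx)
    exact ⟨hik, hkj⟩
  have hℓ : ∀ x ∈ F, 0 < ℓ x ∧ ℓ x ≤ n := fun x hx => by
    obtain ⟨hi, hij, hjn, -⟩ := hcov x (hS.mem_toFinset.1 hx)
    simp only [ℓ]
    omega
  have hmaj : ∀ x ∈ F, τ * ℓ x ≤ w x := fun x hx => by
    obtain ⟨-, hij, -, -, -, hmaj⟩ := hcov x (hS.mem_toFinset.1 hx)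
    exact (hmaj.mul_length_lt hij).le
  have hgrowth : (1 + τ / 2) ^ #F ≤ ∑ x ∈ F, (w x : ℝ) + 1 := by
    refine pow_card_le_sum_add_one hτ0.le F (ℓ ·) (w ·) hmaj fun a ha s hs hle => ?_
    have := sum_majCount_lt_two_mul A s i j (hℓ a ha).1 (fun x hx => hk x (hs hx))
      fun x hx => by exact_mod_cast hle x hx
    exact_mod_cast this
  have htotal : ∑ x ∈ F, w x < 2 * n :=
    sum_majCount_lt_two_mul A F i j hn hk fun x hx => (hℓ x hx).2
  have hbound := natCast_mul_log_le_of_pow_le hτ0.le <|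
    hgrowth.trans (show ∑ x ∈ F, (w x : ℝ) + 1 ≤ 2 * n by exact_mod_cast htotal)
  rw [Set.ncard_eq_toFinset_card S hS, le_div_iff₀ (Real.log_pos (by linarith))]
  calc (#F : ℝ) * Real.log (1 + τ) ≤ 2 * Real.log (2 * n) := hbound
    _ ≤ 2 * Real.log (4 * n) := by gcongr; norm_num

/-- For every position `k`, at most `2·log(4n)/log(1+τ)` distinct values `x`
satisfy `k ∈ Cov_τ(x)`. -/
theorem stmt6 {α : Type*} (τ : ℝ) (hτ0 : 0 < τ) (hτ1 : τ < 1)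
    (A : ℕ → α) (n : ℕ) (hn : 1 ≤ n) (k : ℕ) (hk1 : 1 ≤ k) (hkn : k ≤ n) :
    ({x : α | k ∈ Cov τ A n x}.ncard : ℝ) ≤
      2 * Real.log (4 * n) / Real.log (1 + τ) :=
  stmt6_general τ hτ0 A n hn k
end

section
/- Let 0 < τ < 1 be real and A a sequence of length n over an arbitrary type. Then for every position k ∈ {1, …, n} and every integer ℓ ≥ 0, the number of distinct values x for which there exists a maximal run [l, r] of Cov_τ(x) with l ≤ k ≤ r whose length L = r−l+1 satisfies ⌈2^ℓ/τ⌉ ≤ L ≤ ⌈2^{ℓ+1}/τ⌉ − 1 is less than 8/τ. -/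
/-!
Inside a maximal run `[l, r]` of `Cov_τ(x)` every position lies in a `τ`-majority interval
contained in the run, and a greedy choice of such intervals covers the run at most twice, so `x`
occupies more than `τ (r - l + 1) / 2 ≥ 2^ℓ / 2` positions of the run. The runs counted all contain
`k` and are shorter than `2^(ℓ+1) / τ`, so they lie in a window of fewer than `2^(ℓ+2) / τ`
positions around `k`; since distinct values occupy disjoint positions, there are fewer than `8 / τ`
of them.
-/

open scoped Classical

/-- `[l,r]` is a maximal run of `Cov τ A n x`. -/
def IsMaxRun {α : Type*} (τ : ℝ) (A : ℕ → α) (n : ℕ) (x : α) (l r : ℕ) : Prop :=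
  l ≤ r ∧ (∀ k : ℕ, l ≤ k → k ≤ r → k ∈ Cov τ A n x) ∧
    (l = 1 ∨ (l - 1) ∉ Cov τ A n x) ∧ (r = n ∨ (r + 1) ∉ Cov τ A n x)

open Finset

def IsHeavy (w : ℕ → ℝ) (τ : ℝ) (i j : ℕ) : Prop :=
  τ * ((j : ℝ) - i) < ∑ p ∈ Ico i j, w p

section HeavyCover

variable {w : ℕ → ℝ} {τ : ℝ} {l r : ℕ}

theorem exists_isHeavy_max_right {s : ℕ}
    (h : ∃ i j, l ≤ i ∧ i ≤ s ∧ s < j ∧ j ≤ r ∧ IsHeavy w τ i j) :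
    ∃ i j, l ≤ i ∧ i ≤ s ∧ s < j ∧ j ≤ r ∧ IsHeavy w τ i j ∧
      ∀ i' j', l ≤ i' → i' ≤ s → s < j' → j' ≤ r → IsHeavy w τ i' j' → j' ≤ j := by
  let P : ℕ → Prop := fun j ↦ ∃ i, l ≤ i ∧ i ≤ s ∧ s < j ∧ IsHeavy w τ i j
  obtain ⟨i₀, j₀, hli₀, hi₀s, hsj₀, hj₀r, hheavy₀⟩ := h
  have hP₀ : P j₀ := ⟨i₀, hli₀, hi₀s, hsj₀, hheavy₀⟩
  obtain ⟨i, hli, his, hsj, hheavy⟩ := Nat.findGreatest_spec hj₀r hP₀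
  exact ⟨i, _, hli, his, hsj, Nat.findGreatest_le r, hheavy,
    fun i' j' hli' hi's hsj' hj'r hheavy' ↦
      Nat.le_findGreatest hj'r ⟨i', hli', hi's, hsj', hheavy'⟩⟩

/-- Greedy covering from the left: at each uncovered point `s` take the heavy interval reaching
furthest right. Every point is then covered at most twice; the positions in `[b, s)` account for
the overlap of the next interval with the part already covered. -/
theorem lt_sum_add_two_mul_sum_of_heavy_cover (hw : ∀ p, 0 ≤ w p) (hτ : 0 ≤ τ)
    (hcover : ∀ p, l ≤ p → p < r → ∃ i j, l ≤ i ∧ i ≤ p ∧ p < j ∧ j ≤ r ∧ IsHeavy w τ i j)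
    {s b : ℕ} (hls : l ≤ s) (hsr : s < r)
    (hb : ∀ i j, l ≤ i → i < b → j ≤ r → IsHeavy w τ i j → j ≤ s) :
    τ * ((r : ℝ) - s) < ∑ p ∈ Ico b s, w p + 2 * ∑ p ∈ Ico s r, w p := by
  induction hd : r - s using Nat.strong_induction_on generalizing s b with
  | _ d ih =>
  obtain ⟨i, j, hli, his, hsj, hjr, hheavy, hmax⟩ :=
    exists_isHeavy_max_right (hcover s hls hsr)
  have hbi : b ≤ i := by
    by_contra! hib
    have := hb i j hli hib hjr hheavy
    omega
  have hfirst : τ * ((j : ℝ) - s) < ∑ p ∈ Ico b s, w p + ∑ p ∈ Ico s j, w p := by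
    calc τ * ((j : ℝ) - s) ≤ τ * ((j : ℝ) - i) := by gcongr
      _ < ∑ p ∈ Ico i j, w p := hheavy
      _ = ∑ p ∈ Ico i s, w p + ∑ p ∈ Ico s j, w p := (sum_Ico_consecutive w his hsj.le).symm
      _ ≤ ∑ p ∈ Ico b s, w p + ∑ p ∈ Ico s j, w p := by
          gcongr
          exact fun p _ _ ↦ hw p
  have hsplit : ∑ p ∈ Ico s r, w p = ∑ p ∈ Ico s j, w p + ∑ p ∈ Ico j r, w p :=
    (sum_Ico_consecutive w hsj.le hjr).symm
  have hnonneg : 0 ≤ ∑ p ∈ Ico s j, w p := sum_nonneg fun p _ ↦ hw p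
  rcases hjr.lt_or_eq with hjr | rfl
  · have hrest : τ * ((r : ℝ) - j) < ∑ p ∈ Ico s j, w p + 2 * ∑ p ∈ Ico j r, w p := by
      refine ih (r - j) (by omega) (by omega) hjr (fun i' j' hli' hi's hj'r hheavy' ↦ ?_) rfl
      by_cases hsj' : s < j'
      · exact hmax i' j' hli' (by omega) hsj' hj'r hheavy'
      · omega
    linarith
  · simp only [Ico_self, sum_empty, add_zero] at hsplit
    linarith

theorem lt_two_mul_sum_of_heavy_cover (hw : ∀ p, 0 ≤ w p) (hτ : 0 ≤ τ) (hlr : l < r)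
    (hcover : ∀ p, l ≤ p → p < r → ∃ i j, l ≤ i ∧ i ≤ p ∧ p < j ∧ j ≤ r ∧ IsHeavy w τ i j) :
    τ * ((r : ℝ) - l) < 2 * ∑ p ∈ Ico l r, w p := by
  simpa using lt_sum_add_two_mul_sum_of_heavy_cover hw hτ hcover le_rfl hlr
    (b := l) fun i j hli hil ↦ absurd hli (not_le.mpr hil)

end HeavyCover

theorem Set.ncard_mul_le_card_of_le_card_fiber {β γ : Type*} [DecidableEq γ] (W : Finset β)
    (f : β → γ) {S : Set γ} {c : ℝ} (hc : 0 < c) (hS : ∀ y ∈ S, c ≤ #{p ∈ W | f p = y}) :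
    S.ncard * c ≤ #W := by
  have hsub : S ⊆ W.image f := by
    intro y hy
    obtain ⟨p, hp⟩ := card_pos.mp (Nat.cast_pos.mp (hc.trans_le (hS y hy)))
    rw [mem_filter] at hp
    exact Finset.mem_image.mpr ⟨p, hp⟩
  have hfin : S.Finite := (W.image f).finite_toSet.subset hsub
  rw [Set.ncard_eq_toFinset_card S hfin]
  calc (#hfin.toFinset : ℝ) * c = ∑ _y ∈ hfin.toFinset, c := by rw [sum_const, nsmul_eq_mul]
    _ ≤ ∑ y ∈ hfin.toFinset, (#{p ∈ W | f p = y} : ℝ) :=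
      sum_le_sum fun y hy ↦ hS y (hfin.mem_toFinset.mp hy)
    _ ≤ ∑ y ∈ W.image f, (#{p ∈ W | f p = y} : ℝ) :=
      sum_le_sum_of_subset_of_nonneg (fun y hy ↦ hsub (hfin.mem_toFinset.mp hy))
        fun _ _ _ ↦ Nat.cast_nonneg _
    _ = #W := by rw [card_eq_sum_card_image f W]; push_cast; rfl

section MaximalRun

variable {α : Type*} {τ : ℝ} {A : ℕ → α} {n : ℕ} {x : α} {l r : ℕ}

theorem majCount_eq_sum_ite (i j : ℕ) :
    (majCount A i j x : ℝ) = ∑ p ∈ Ico i (j + 1), if A p = x then 1 else 0 := by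
  rw [sum_boole, Ico_add_one_right_eq_Icc]
  rfl

theorem isMaj_iff_isHeavy {i j : ℕ} :
    IsMaj τ A i j x ↔ IsHeavy (fun p ↦ if A p = x then 1 else 0) τ i (j + 1) := by
  rw [IsMaj, IsHeavy, majCount_eq_sum_ite]
  push_cast
  ring_nf

theorem IsMaxRun.exists_isMaj_subset (h : IsMaxRun τ A n x l r) {p : ℕ} (hlp : l ≤ p)
    (hpr : p ≤ r) : ∃ i j, l ≤ i ∧ i ≤ p ∧ p ≤ j ∧ j ≤ r ∧ IsMaj τ A i j x := by
  obtain ⟨-, hcov, hleft, hright⟩ := h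
  obtain ⟨i, j, hi, hij, hjn, hip, hpj, hmaj⟩ := hcov p hlp hpr
  refine ⟨i, j, ?_, hip, hpj, ?_, hmaj⟩
  · by_contra! hil
    refine hleft.elim (by omega) (· ⟨i, j, hi, hij, hjn, by omega, by omega, hmaj⟩)
  · by_contra! hrj
    refine hright.elim (by omega) (· ⟨i, j, hi, hij, hjn, by omega, by omega, hmaj⟩)

theorem IsMaxRun.lt_two_mul_majCount (h : IsMaxRun τ A n x l r) (hτ : 0 ≤ τ) :
    τ * ((r : ℝ) - l + 1) < 2 * majCount A l r x := by
  have hcover := lt_two_mul_sum_of_heavy_cover (w := fun p ↦ if A p = x then 1 else 0)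
    (fun p ↦ by positivity) hτ (Nat.lt_succ_of_le h.1) fun p hlp hpr ↦ by
      obtain ⟨i, j, hli, hip, hpj, hjr, hmaj⟩ := h.exists_isMaj_subset hlp (Nat.le_of_lt_succ hpr)
      exact ⟨i, j + 1, hli, hip, by omega, by omega, isMaj_iff_isHeavy.mp hmaj⟩
  rw [majCount_eq_sum_ite]
  push_cast at hcover
  linarith

theorem IsMaxRun.lt_two_mul_card_filter_window (h : IsMaxRun τ A n x l r) (hτ : 0 ≤ τ)
    {k M : ℕ} (hlk : l ≤ k) (hkr : k ≤ r) (hlen : r - l + 1 ≤ M) :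
    τ * ((r : ℝ) - l + 1) < 2 * #{p ∈ Ico (k + 1 - M) (k + M) | A p = x} := by
  have hsub : majCount A l r x ≤ #{p ∈ Ico (k + 1 - M) (k + M) | A p = x} :=
    card_le_card <| filter_subset_filter _ fun p hp ↦ by
      rw [mem_Icc] at hp
      rw [mem_Ico]
      omega
  have hsubℝ : (majCount A l r x : ℝ) ≤ #{p ∈ Ico (k + 1 - M) (k + M) | A p = x} := by
    exact_mod_cast hsub
  linarith [h.lt_two_mul_majCount hτ]

end MaximalRun

theorem stmt8_general {α : Type*} (τ : ℝ) (hτ0 : 0 < τ)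
    (A : ℕ → α) (n : ℕ) (k : ℕ) (ℓ : ℕ) :
    ({x : α | ∃ l r : ℕ, IsMaxRun τ A n x l r ∧ l ≤ k ∧ k ≤ r ∧
        ⌈((2 : ℝ) ^ ℓ) / τ⌉₊ ≤ r - l + 1 ∧
        r - l + 1 ≤ ⌈((2 : ℝ) ^ (ℓ + 1)) / τ⌉₊ - 1}.ncard : ℝ) < 8 / τ := by
  set M := ⌈((2 : ℝ) ^ (ℓ + 1)) / τ⌉₊ - 1
  set W := Ico (k + 1 - M) (k + M)
  set S := {x : α | ∃ l r : ℕ, IsMaxRun τ A n x l r ∧ l ≤ k ∧ k ≤ r ∧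
    ⌈((2 : ℝ) ^ ℓ) / τ⌉₊ ≤ r - l + 1 ∧ r - l + 1 ≤ M}
  have hM : (M : ℝ) < 2 ^ (ℓ + 1) / τ := by
    have hceil : 0 < ⌈((2 : ℝ) ^ (ℓ + 1)) / τ⌉₊ := Nat.ceil_pos.mpr (by positivity)
    exact Nat.lt_ceil.mp (by omega)
  have hW : #W ≤ 2 * M := by rw [Nat.card_Ico]; omega
  have hfiber : ∀ x ∈ S, (2 : ℝ) ^ ℓ / 2 ≤ #{p ∈ W | A p = x} := by
    rintro x ⟨l, r, hrun, hlk, hkr, hmin, hmax⟩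
    have hlen : (2 : ℝ) ^ ℓ ≤ τ * ((r : ℝ) - l + 1) := by
      have := (Nat.le_ceil _).trans (Nat.cast_le.mpr hmin)
      rw [div_le_iff₀ hτ0, Nat.cast_add_one, Nat.cast_sub hrun.1] at this
      linarith
    linarith [hrun.lt_two_mul_card_filter_window hτ0.le hlk hkr hmax]
  have hcount := Set.ncard_mul_le_card_of_le_card_fiber W A (by positivity) hfiber
  have hWM : (#W : ℝ) ≤ 2 * M := by exact_mod_cast hW
  have hMτ : (M : ℝ) * τ < 2 * 2 ^ ℓ := by rw [lt_div_iff₀ hτ0, pow_succ] at hM; linarith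
  rw [lt_div_iff₀ hτ0]
  refine lt_of_mul_lt_mul_right ?_ (by positivity : (0 : ℝ) ≤ 2 ^ ℓ)
  nlinarith [mul_le_mul_of_nonneg_right (hcount.trans hWM) hτ0.le]

/-- At most `8/τ` distinct values `x` have a maximal run of `Cov_τ(x)` covering a given
position `k` whose length lies between `⌈2^ℓ/τ⌉` and `⌈2^(ℓ+1)/τ⌉ - 1`. -/
theorem stmt8 {α : Type*} (τ : ℝ) (hτ0 : 0 < τ) (hτ1 : τ < 1)
    (A : ℕ → α) (n : ℕ) (k : ℕ) (hk1 : 1 ≤ k) (hkn : k ≤ n) (ℓ : ℕ) :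
    ({x : α | ∃ l r : ℕ, IsMaxRun τ A n x l r ∧ l ≤ k ∧ k ≤ r ∧
        ⌈((2 : ℝ) ^ ℓ) / τ⌉₊ ≤ r - l + 1 ∧
        r - l + 1 ≤ ⌈((2 : ℝ) ^ (ℓ + 1)) / τ⌉₊ - 1}.ncard : ℝ) < 8 / τ :=
  stmt8_general τ hτ0 A n k ℓ
end

section
/- Let 0 < τ < 1 be real and A a sequence of length n over an arbitrary type. For every value x, the number of maximal runs of Cov_τ(x) is at most occ(x) = #{k : 1 ≤ k ≤ n, A(k) = x}. Consequently, the total number of maximal runs, summed over all distinct values x occurring in A, is at most n. -/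
open scoped Classical

lemma cov_bounds {α : Type*} {τ : ℝ} {A : ℕ → α} {n : ℕ} {x : α} {k : ℕ}
    (h : k ∈ Cov τ A n x) : 1 ≤ k ∧ k ≤ n := by
  obtain ⟨i, j, hi1, hij, hjn, hik, hkj, _⟩ := h
  omega

lemma run_has_occ {α : Type*} {τ : ℝ} (hτ0 : 0 < τ) {A : ℕ → α} {n : ℕ} {x : α} {l r : ℕ}
    (h : IsMaxRun τ A n x l r) :
    ∃ k, l ≤ k ∧ k ≤ r ∧ 1 ≤ k ∧ k ≤ n ∧ A k = x := by
  obtain ⟨hlr, hcov, hl, hr⟩ := h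
  obtain ⟨i, j, hi1, hij, hjn, hil, hlj, hmaj⟩ := hcov l le_rfl hlr
  have hpos : 0 < majCount A i j x := by
    have h1 : (0:ℝ) ≤ τ * ((j:ℝ) - i + 1) := by
      apply mul_nonneg hτ0.le
      have : (i:ℝ) ≤ j := by exact_mod_cast hij
      linarith
    have h2 := lt_of_le_of_lt h1 hmaj
    exact_mod_cast h2
  obtain ⟨p, hp⟩ := Finset.card_pos.mp hpos
  simp only [Finset.mem_filter, Finset.mem_Icc] at hp
  obtain ⟨⟨hip, hpj⟩, hpx⟩ := hp
  have hli : l ≤ i := by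
    by_contra hcon
    push_neg at hcon
    rcases hl with h1 | h1
    · omega
    · exact h1 ⟨i, j, hi1, hij, hjn, by omega, by omega, hmaj⟩
  have hjr : j ≤ r := by
    by_contra hcon
    push_neg at hcon
    rcases hr with h1 | h1
    · omega
    · exact h1 ⟨i, j, hi1, hij, hjn, by omega, by omega, hmaj⟩
  exact ⟨p, by omega, by omega, by omega, by omega, hpx⟩

lemma run_unique {α : Type*} {τ : ℝ} {A : ℕ → α} {n : ℕ} {x : α} {l r l' r' p : ℕ}
    (h : IsMaxRun τ A n x l r) (h' : IsMaxRun τ A n x l' r')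
    (hp1 : l ≤ p) (hp2 : p ≤ r) (hp3 : l' ≤ p) (hp4 : p ≤ r') : l = l' ∧ r = r' := by
  have hb : 1 ≤ l ∧ l ≤ n := cov_bounds (h.2.1 l le_rfl h.1)
  have hb' : 1 ≤ l' ∧ l' ≤ n := cov_bounds (h'.2.1 l' le_rfl h'.1)
  have hrb : 1 ≤ r ∧ r ≤ n := cov_bounds (h.2.1 r h.1 le_rfl)
  have hrb' : 1 ≤ r' ∧ r' ≤ n := cov_bounds (h'.2.1 r' h'.1 le_rfl)
  constructor
  · by_contra hne
    rcases Nat.lt_or_ge l l' with hc | hc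
    · have hmem : l' - 1 ∈ Cov τ A n x := h.2.1 (l'-1) (by omega) (by omega)
      rcases h'.2.2.1 with e | e
      · omega
      · exact e hmem
    · have hc' : l' < l := by omega
      have hmem : l - 1 ∈ Cov τ A n x := h'.2.1 (l-1) (by omega) (by omega)
      rcases h.2.2.1 with e | e
      · omega
      · exact e hmem
  · by_contra hne
    rcases Nat.lt_or_ge r r' with hc | hc
    · have hmem : r + 1 ∈ Cov τ A n x := h'.2.1 (r+1) (by omega) (by omega)
      rcases h.2.2.2 with e | e
      · omega
      · exact e hmem
    · have hc' : r' < r := by omega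
      have hmem : r' + 1 ∈ Cov τ A n x := h.2.1 (r'+1) (by omega) (by omega)
      rcases h'.2.2.2 with e | e
      · omega
      · exact e hmem

/-- The number of maximal runs of `Cov_τ(x)` is at most `occ(x)`; hence the total number
of maximal runs over all distinct values occurring in `A` is at most `n`. -/
theorem stmt10 {α : Type*} (τ : ℝ) (hτ0 : 0 < τ) (hτ1 : τ < 1)
    (A : ℕ → α) (n : ℕ) :
    (∀ x : α,
      {p : ℕ × ℕ | IsMaxRun τ A n x p.1 p.2}.ncard ≤ majCount A 1 n x) ∧
    ∑ x ∈ (Finset.Icc 1 n).image A,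
      {p : ℕ × ℕ | IsMaxRun τ A n x p.1 p.2}.ncard ≤ n := by
  have hmain : ∀ x : α,
      {p : ℕ × ℕ | IsMaxRun τ A n x p.1 p.2}.ncard ≤ majCount A 1 n x := by
    intro x
    classical
    let f : ℕ × ℕ → ℕ := fun q =>
      if h : IsMaxRun τ A n x q.1 q.2 then (run_has_occ hτ0 h).choose else 0
    have hf : ∀ q (h : IsMaxRun τ A n x q.1 q.2),
        q.1 ≤ f q ∧ f q ≤ q.2 ∧ 1 ≤ f q ∧ f q ≤ n ∧ A (f q) = x := by
      intro q h
      simp only [f, dif_pos h]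
      exact (run_has_occ hτ0 h).choose_spec
    have hmaps : ∀ q ∈ {p : ℕ × ℕ | IsMaxRun τ A n x p.1 p.2},
        f q ∈ (((Finset.Icc 1 n).filter (fun k => A k = x) : Finset ℕ) : Set ℕ) := by
      intro q hq
      obtain ⟨_, _, h1, h2, h3⟩ := hf q hq
      simp only [Finset.coe_filter, Set.mem_setOf_eq, Finset.mem_Icc]
      exact ⟨⟨h1, h2⟩, h3⟩
    have hinj : Set.InjOn f {p : ℕ × ℕ | IsMaxRun τ A n x p.1 p.2} := by
      intro q hq q' hq' heq
      obtain ⟨a1, a2, _, _, _⟩ := hf q hq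
      obtain ⟨b1, b2, _, _, _⟩ := hf q' hq'
      rw [heq] at a1 a2
      obtain ⟨e1, e2⟩ := run_unique hq hq' a1 a2 b1 b2
      exact Prod.ext e1 e2
    calc {p : ℕ × ℕ | IsMaxRun τ A n x p.1 p.2}.ncard
        ≤ (((Finset.Icc 1 n).filter (fun k => A k = x) : Finset ℕ) : Set ℕ).ncard :=
          Set.ncard_le_ncard_of_injOn f hmaps hinj (Set.toFinite _)
      _ = majCount A 1 n x := by rw [Set.ncard_coe_finset]; rfl
  refine ⟨hmain, ?_⟩
  calc ∑ x ∈ (Finset.Icc 1 n).image A,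
        {p : ℕ × ℕ | IsMaxRun τ A n x p.1 p.2}.ncard
      ≤ ∑ x ∈ (Finset.Icc 1 n).image A, majCount A 1 n x :=
        Finset.sum_le_sum (fun x _ => hmain x)
    _ = (Finset.Icc 1 n).card := (Finset.card_eq_sum_card_image A (Finset.Icc 1 n)).symm
    _ = n := by rw [Nat.card_Icc]; omega
end

section
/- Let n ≥ 2 and t ≥ 1 be integers and let I_1, …, I_m be (not necessarily distinct) nonempty integer intervals contained in {1, …, n}. Suppose that for every k with 1 ≤ k ≤ n−1, at most t of the intervals I_1, …, I_m intersect the two-element set {k, k+1}. Then the index set {1, …, m} can be partitioned into at most t classes such that within each class, any two intervals I = [a, b] and I' = [a', b'] with b < a' satisfy a' ≥ b + 2 (i.e., intervals in the same class are pairwise disjoint and separated by at least one position). -/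
open scoped Classical

/-!
Colour the intervals greedily in order of increasing left endpoint. When the interval `[p, q]`
arrives, every earlier interval not separated from it by a gap ends at `p - 1` or later, hence
meets the pair `{p - 1, p}` (or `{1, 2}` when `p = 1`), as does `[p, q]` itself. So fewer than
`t` colours are blocked and one of the `t` colours is free.
-/

namespace Coalescing

open Finset

variable {ι : Type*}

def Separated (a b : ι → ℕ) (s s' : ι) : Prop :=
  b s + 2 ≤ a s' ∨ b s' + 2 ≤ a s

theorem Separated.symm {a b : ι → ℕ} {s s' : ι} (h : Separated a b s s') : Separated a b s' s :=
  Or.symm h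

theorem Icc_inter_critical_pair_nonempty {p q r : ℕ} (hp : 1 ≤ p) (hpq : p ≤ q) (hpr : p ≤ r)
    (hrq : r ≤ q + 1) :
    (Icc p q ∩ {max 1 (r - 1), max 1 (r - 1) + 1}).Nonempty := by
  have hk := max_cases 1 (r - 1)
  by_cases hr : r ≤ 1
  · exact ⟨1, by simp only [mem_inter, mem_Icc, mem_insert, mem_singleton]; omega⟩
  by_cases hpr' : p ≤ r - 1
  · exact ⟨r - 1, by simp only [mem_inter, mem_Icc, mem_insert, mem_singleton]; omega⟩
  · exact ⟨r, by simp only [mem_inter, mem_Icc, mem_insert, mem_singleton]; omega⟩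

theorem card_conflicts_lt {n t : ℕ} (hn : 2 ≤ n) {a b : ι → ℕ} {S : Finset ι} {x : ι}
    (hx : x ∉ S) (hmax : ∀ s ∈ S, a s ≤ a x)
    (hab : ∀ s ∈ insert x S, 1 ≤ a s ∧ a s ≤ b s ∧ b s ≤ n)
    (hmeet : ∀ k, 1 ≤ k → k ≤ n - 1 →
      #{s ∈ insert x S | (Icc (a s) (b s) ∩ {k, k + 1}).Nonempty} ≤ t) :
    #{s ∈ S | a x ≤ b s + 1} < t := by
  set k := max 1 (a x - 1)
  have hx_ab := hab x (mem_insert_self x S)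
  have hsub : insert x {s ∈ S | a x ≤ b s + 1} ⊆
      {s ∈ insert x S | (Icc (a s) (b s) ∩ {k, k + 1}).Nonempty} := by
    intro s hs
    rw [mem_insert, mem_filter] at hs
    rw [mem_filter]
    rcases hs with rfl | ⟨hsS, hconf⟩
    · exact ⟨mem_insert_self s S,
        Icc_inter_critical_pair_nonempty hx_ab.1 hx_ab.2.1 le_rfl (by omega)⟩
    · exact ⟨mem_insert_of_mem hsS,
        Icc_inter_critical_pair_nonempty (hab s (mem_insert_of_mem hsS)).1
          (hab s (mem_insert_of_mem hsS)).2.1 (hmax s hsS) hconf⟩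
  have hx_notMem : x ∉ {s ∈ S | a x ≤ b s + 1} := fun h => hx (mem_filter.mp h).1
  calc #{s ∈ S | a x ≤ b s + 1} < #(insert x {s ∈ S | a x ≤ b s + 1}) := by
        rw [card_insert_of_notMem hx_notMem]; omega
    _ ≤ _ := card_le_card hsub
    _ ≤ t := hmeet k (le_max_left _ _) (by omega)

theorem exists_separated_coloring {n t : ℕ} (hn : 2 ≤ n) (a b : ι → ℕ) (S : Finset ι)
    (hab : ∀ s ∈ S, 1 ≤ a s ∧ a s ≤ b s ∧ b s ≤ n)
    (hmeet : ∀ k, 1 ≤ k → k ≤ n - 1 →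
      #{s ∈ S | (Icc (a s) (b s) ∩ {k, k + 1}).Nonempty} ≤ t) :
    ∃ f : ι → ℕ, (∀ s ∈ S, f s ∈ Icc 1 t) ∧
      ∀ s ∈ S, ∀ s' ∈ S, s ≠ s' → f s = f s' → Separated a b s s' := by
  induction S using Finset.induction_on_max_value a with
  | empty => exact ⟨fun _ => 1, by simp, by simp⟩
  | insert x S hx hmax ih =>
    obtain ⟨f, hf_mem, hf_sep⟩ := ih (fun s hs => hab s (mem_insert_of_mem hs))
      (fun k hk₁ hk₂ => (card_le_card (filter_subset_filter _ (subset_insert x S))).trans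
        (hmeet k hk₁ hk₂))
    have hconf := card_conflicts_lt hn hx hmax hab hmeet
    obtain ⟨c, hc, hc_free⟩ := exists_mem_notMem_of_card_lt_card
      (s := {s ∈ S | a x ≤ b s + 1}.image f) (t := Icc 1 t)
      (card_image_le.trans_lt (by rwa [Nat.card_Icc, Nat.add_sub_cancel]))
    have hsep_new : ∀ s ∈ S, f s = c → Separated a b s x := fun s hs hfs => by
      by_contra h
      exact hc_free (mem_image.mpr ⟨s, mem_filter.mpr ⟨hs, by unfold Separated at h; omega⟩, hfs⟩)
    refine ⟨Function.update f x c, fun s hs => ?_, fun s hs s' hs' hne hfs => ?_⟩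
    · rcases mem_insert.mp hs with rfl | hsS
      · simpa using hc
      · rw [Function.update_of_ne (ne_of_mem_of_not_mem hsS hx)]
        exact hf_mem s hsS
    · rcases mem_insert.mp hs with rfl | hsS <;> rcases mem_insert.mp hs' with rfl | hs'S
      · exact absurd rfl hne
      · rw [Function.update_self, Function.update_of_ne (ne_of_mem_of_not_mem hs'S hx)] at hfs
        exact (hsep_new s' hs'S hfs.symm).symm
      · rw [Function.update_self, Function.update_of_ne (ne_of_mem_of_not_mem hsS hx)] at hfs
        exact hsep_new s hsS hfs
      · rw [Function.update_of_ne (ne_of_mem_of_not_mem hsS hx),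
          Function.update_of_ne (ne_of_mem_of_not_mem hs'S hx)] at hfs
        exact hf_sep s hsS s' hs'S hne hfs

end Coalescing

theorem stmt11_general (n t m : ℕ) (hn : 2 ≤ n)
    (a b : ℕ → ℕ)
    (hab : ∀ s ∈ Finset.Icc 1 m, 1 ≤ a s ∧ a s ≤ b s ∧ b s ≤ n)
    (hmeet : ∀ k : ℕ, 1 ≤ k → k ≤ n - 1 →
      ((Finset.Icc 1 m).filter
        (fun s => (Finset.Icc (a s) (b s) ∩ ({k, k + 1} : Finset ℕ)).Nonempty)).card ≤ t) :
    ∃ f : ℕ → ℕ,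
      (∀ s ∈ Finset.Icc 1 m, f s ∈ Finset.Icc 1 t) ∧
      (∀ s ∈ Finset.Icc 1 m, ∀ s' ∈ Finset.Icc 1 m,
        f s = f s' → b s < a s' → b s + 2 ≤ a s') := by
  obtain ⟨f, hf_mem, hf_sep⟩ := Coalescing.exists_separated_coloring hn a b _ hab hmeet
  refine ⟨f, hf_mem, fun s hs s' hs' hfs hlt => ?_⟩
  have hs_ab := hab s hs
  have hs'_ab := hab s' hs'
  obtain rfl | hne := eq_or_ne s s'
  · omega
  · rcases hf_sep s hs s' hs' hne hfs with h | h <;> omega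

/-- Coalescing claim: if every pair of adjacent positions `{k, k+1}` meets at most `t`
of the intervals `[a s, b s]` (`1 ≤ s ≤ m`), then the intervals can be partitioned
into at most `t` classes so that any two intervals in a class are separated by at
least one empty position. -/
theorem stmt11 (n t m : ℕ) (hn : 2 ≤ n) (ht : 1 ≤ t)
    (a b : ℕ → ℕ)
    (hab : ∀ s ∈ Finset.Icc 1 m, 1 ≤ a s ∧ a s ≤ b s ∧ b s ≤ n)
    (hmeet : ∀ k : ℕ, 1 ≤ k → k ≤ n - 1 →
      ((Finset.Icc 1 m).filter
        (fun s => (Finset.Icc (a s) (b s) ∩ ({k, k + 1} : Finset ℕ)).Nonempty)).card ≤ t) :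
    ∃ f : ℕ → ℕ,
      (∀ s ∈ Finset.Icc 1 m, f s ∈ Finset.Icc 1 t) ∧
      (∀ s ∈ Finset.Icc 1 m, ∀ s' ∈ Finset.Icc 1 m,
        f s = f s' → b s < a s' → b s + 2 ≤ a s') :=
  stmt11_general n t m hn a b hab hmeet
end

section
/- Let 0 < τ < 1 be real and A a sequence of length n over an arbitrary type. Let 1 ≤ i ≤ j ≤ n, set ℓ = ⌈log₂(j−i+1)⌉ + 1, and let P ⊆ {1, …, n} be an integer interval of length 2^ℓ with [i, j] ⊆ P. If the value x is a τ-majority in A[i, j], then #{k ∈ P : A(k) = x} > (τ/4)·2^ℓ, i.e., x is a (τ/4)-majority in the range P. -/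
open scoped Classical

lemma pow_clog_lt_two_mul (m : ℕ) (hm : 1 ≤ m) : 2 ^ Nat.clog 2 m < 2 * m := by
  rcases eq_or_lt_of_le hm with h | h
  · simp [← h]
  · have h1 : Nat.clog 2 m ≠ 0 := by
      intro h0
      have hle := Nat.le_pow_clog (by norm_num : 1 < 2) m
      rw [h0] at hle
      simp at hle
      omega
    have h2 : 2 ^ (Nat.clog 2 m - 1) < m := Nat.pow_pred_clog_lt_self (by norm_num) h
    calc 2 ^ Nat.clog 2 m = 2 * 2 ^ (Nat.clog 2 m - 1) := by
          rw [← pow_succ']; congr 1; omega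
      _ < 2 * m := by omega

/-- If `x` is a `τ`-majority in `A[i,j]` and `P = [p, p + 2^ℓ - 1] ⊆ {1,…,n}` is an
interval of length `2^ℓ` containing `[i,j]`, where `ℓ = ⌈log₂(j-i+1)⌉ + 1`, then `x`
occurs more than `(τ/4)·2^ℓ` times in `P`, i.e., `x` is a `τ/4`-majority in `P`. -/
theorem stmt13 {α : Type*} (τ : ℝ) (hτ0 : 0 < τ) (hτ1 : τ < 1)
    (A : ℕ → α) (n i j p : ℕ)
    (h1 : 1 ≤ i) (hij : i ≤ j) (hjn : j ≤ n)
    (hp1 : 1 ≤ p) (hpi : p ≤ i)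
    (hjP : j ≤ p + 2 ^ (Nat.clog 2 (j - i + 1) + 1) - 1)
    (hPn : p + 2 ^ (Nat.clog 2 (j - i + 1) + 1) - 1 ≤ n)
    (x : α) (hx : IsMaj τ A i j x) :
    (τ / 4) * (2 : ℝ) ^ (Nat.clog 2 (j - i + 1) + 1) <
      (majCount A p (p + 2 ^ (Nat.clog 2 (j - i + 1) + 1) - 1) x : ℝ) := by
  set ℓ := Nat.clog 2 (j - i + 1) + 1 with hℓ
  have hmono : majCount A i j x ≤ majCount A p (p + 2 ^ ℓ - 1) x := by
    apply Finset.card_le_card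
    apply Finset.filter_subset_filter
    apply Finset.Icc_subset_Icc hpi hjP
  have hpow : (2 : ℕ) ^ ℓ < 4 * (j - i + 1) := by
    have := pow_clog_lt_two_mul (j - i + 1) (by omega)
    rw [hℓ, pow_succ]
    omega
  have hpowR : (2 : ℝ) ^ ℓ < 4 * ((j : ℝ) - i + 1) := by
    have : ((2 : ℕ) ^ ℓ : ℝ) < ((4 * (j - i + 1) : ℕ) : ℝ) := by exact_mod_cast hpow
    push_cast at this
    have hji : ((j - i : ℕ) : ℝ) = (j : ℝ) - i := by
      have := Nat.cast_sub hij (R := ℝ); linarith [this]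
    linarith
  have h2 : (τ / 4) * (2 : ℝ) ^ ℓ < τ * ((j : ℝ) - i + 1) := by
    have h4 : (0 : ℝ) < τ / 4 := by linarith
    nlinarith
  calc (τ / 4) * (2 : ℝ) ^ ℓ < τ * ((j : ℝ) - i + 1) := h2
    _ < (majCount A i j x : ℝ) := hx
    _ ≤ _ := by exact_mod_cast hmono
end

section
/- Let b ≥ 1 and N ≥ 1 be integers and let B : {1, …, N} → {0, 1} be a binary string in which every maximal run of 1s (maximal interval of consecutive positions all holding value 1) has length at least b. Then for every window of b consecutive positions [c+1, c+b] ⊆ {1, …, N}: (1) there is at most one index p with c+1 ≤ p ≤ c+b−1, B(p) = 1 and B(p+1) = 0; (2) there is at most one index q with c+1 ≤ q ≤ c+b−1, B(q) = 0 and B(q+1) = 1; and (3) if both such p and q exist, then p < q. -/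
/-- In a binary string whose maximal runs of 1s all have length at least `b`, any
window of `b` consecutive positions contains at most one `1→0` transition, at most
one `0→1` transition, and the former (if both exist) precedes the latter. -/
theorem stmt15 (b N : ℕ) (hb : 1 ≤ b) (hN : 1 ≤ N)
    (B : ℕ → ℕ) (hbin : ∀ i ∈ Finset.Icc 1 N, B i = 0 ∨ B i = 1)
    (hruns : ∀ l r : ℕ, 1 ≤ l → l ≤ r → r ≤ N →
      (∀ k : ℕ, l ≤ k → k ≤ r → B k = 1) →
      (l = 1 ∨ B (l - 1) = 0) → (r = N ∨ B (r + 1) = 0) →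
      b ≤ r - l + 1)
    (c : ℕ) (hwin : c + b ≤ N) :
    (∀ p p' : ℕ,
      (c + 1 ≤ p ∧ p ≤ c + b - 1 ∧ B p = 1 ∧ B (p + 1) = 0) →
      (c + 1 ≤ p' ∧ p' ≤ c + b - 1 ∧ B p' = 1 ∧ B (p' + 1) = 0) → p = p') ∧
    (∀ q q' : ℕ,
      (c + 1 ≤ q ∧ q ≤ c + b - 1 ∧ B q = 0 ∧ B (q + 1) = 1) →
      (c + 1 ≤ q' ∧ q' ≤ c + b - 1 ∧ B q' = 0 ∧ B (q' + 1) = 1) → q = q') ∧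
    (∀ p q : ℕ,
      (c + 1 ≤ p ∧ p ≤ c + b - 1 ∧ B p = 1 ∧ B (p + 1) = 0) →
      (c + 1 ≤ q ∧ q ≤ c + b - 1 ∧ B q = 0 ∧ B (q + 1) = 1) → p < q) := by
  classical
  -- forward: a 0→1 transition at q forces ones on [q+1, q+b]
  have fwd : ∀ q : ℕ, q + 1 ≤ N → B q = 0 → B (q+1) = 1 →
      q + b ≤ N ∧ ∀ k, q + 1 ≤ k → k ≤ q + b → B k = 1 := by
    intro q hqN h0 h1
    set S := (Finset.Icc (q+1) N).filter (fun r => ∀ k ∈ Finset.Icc (q+1) r, B k = 1)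
      with hS
    have hmem : q + 1 ∈ S := by
      simp only [hS, Finset.mem_filter, Finset.mem_Icc]
      refine ⟨⟨le_refl _, hqN⟩, ?_⟩
      intro k hk
      try simp only [Finset.mem_Icc] at hk
      have : k = q + 1 := by omega
      simpa [this] using h1
    have hne : S.Nonempty := ⟨_, hmem⟩
    set r := S.max' hne with hr
    have hrS : r ∈ S := S.max'_mem hne
    simp only [hS, Finset.mem_filter, Finset.mem_Icc] at hrS
    obtain ⟨⟨hr1, hrN⟩, hrall⟩ := hrS
    have hrend : r = N ∨ B (r+1) = 0 := by
      by_cases h : r = N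
      · exact Or.inl h
      · right
        have hrN' : r + 1 ≤ N := by omega
        rcases hbin (r+1) (by first | exact ⟨by omega, by omega⟩ | (simp only [Finset.mem_Icc]; omega)) with h0' | h1'
        · exact h0'
        · exfalso
          have hin : r + 1 ∈ S := by
            simp only [hS, Finset.mem_filter, Finset.mem_Icc]
            refine ⟨⟨by omega, hrN'⟩, ?_⟩
            intro k hk
            try simp only [Finset.mem_Icc] at hk
            rcases Nat.lt_or_ge k (r+1) with h' | h'
            · exact hrall k (by first | exact ⟨by omega, by omega⟩ | (simp only [Finset.mem_Icc]; omega))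
            · have : k = r + 1 := by omega
              simpa [this] using h1'
          have := S.le_max' _ hin
          omega
    have hb' := hruns (q+1) r (by omega) hr1 hrN
      (fun k hk1 hk2 => hrall k (by first | exact ⟨by omega, by omega⟩ | (simp only [Finset.mem_Icc]; omega)))
      (Or.inr (by simpa using h0)) hrend
    exact ⟨by omega, fun k hk1 hk2 => hrall k (by first | exact ⟨by omega, by omega⟩ | (simp only [Finset.mem_Icc]; omega))⟩
  -- backward: a 1→0 transition at p forces ones on [p+1-b, p]
  have bwd : ∀ p : ℕ, 1 ≤ p → p ≤ N → B p = 1 → B (p+1) = 0 →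
      b ≤ p ∧ ∀ k, p + 1 - b ≤ k → k ≤ p → B k = 1 := by
    intro p hp1 hpN h1 h0
    set S := (Finset.Icc 1 p).filter (fun l => ∀ k ∈ Finset.Icc l p, B k = 1)
      with hS
    have hmem : p ∈ S := by
      simp only [hS, Finset.mem_filter, Finset.mem_Icc]
      refine ⟨⟨hp1, le_refl _⟩, ?_⟩
      intro k hk
      try simp only [Finset.mem_Icc] at hk
      have : k = p := by omega
      simpa [this] using h1
    have hne : S.Nonempty := ⟨_, hmem⟩
    set l := S.min' hne with hl
    have hlS : l ∈ S := S.min'_mem hne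
    simp only [hS, Finset.mem_filter, Finset.mem_Icc] at hlS
    obtain ⟨⟨hl1, hlp⟩, hlall⟩ := hlS
    have hlstart : l = 1 ∨ B (l-1) = 0 := by
      by_cases h : l = 1
      · exact Or.inl h
      · right
        have hl2 : 2 ≤ l := by omega
        rcases hbin (l-1) (by first | exact ⟨by omega, by omega⟩ | (simp only [Finset.mem_Icc]; omega)) with h0' | h1'
        · exact h0'
        · exfalso
          have hin : l - 1 ∈ S := by
            simp only [hS, Finset.mem_filter, Finset.mem_Icc]
            refine ⟨⟨by omega, by omega⟩, ?_⟩
            intro k hk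
            try simp only [Finset.mem_Icc] at hk
            rcases Nat.lt_or_ge k l with h' | h'
            · have : k = l - 1 := by omega
              simpa [this] using h1'
            · exact hlall k (by first | exact ⟨by omega, by omega⟩ | (simp only [Finset.mem_Icc]; omega))
          have := S.min'_le _ hin
          omega
    have hb' := hruns l p hl1 hlp hpN
      (fun k hk1 hk2 => hlall k (by first | exact ⟨by omega, by omega⟩ | (simp only [Finset.mem_Icc]; omega)))
      hlstart (Or.inr h0)
    exact ⟨by omega, fun k hk1 hk2 => hlall k (by first | exact ⟨by omega, by omega⟩ | (simp only [Finset.mem_Icc]; omega))⟩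
  refine ⟨?_, ?_, ?_⟩
  · -- at most one 1→0
    intro p p' ⟨hp1, hp2, hp3, hp4⟩ ⟨hp1', hp2', hp3', hp4'⟩
    by_contra hne
    rcases Nat.lt_or_ge p p' with h | h
    · obtain ⟨hbp, hall⟩ := bwd p' (by omega) (by omega) hp3' hp4'
      have := hall (p+1) (by omega) (by omega)
      omega
    · have h' : p' < p := by omega
      obtain ⟨hbp, hall⟩ := bwd p (by omega) (by omega) hp3 hp4
      have := hall (p'+1) (by omega) (by omega)
      omega
  · -- at most one 0→1
    intro q q' ⟨hq1, hq2, hq3, hq4⟩ ⟨hq1', hq2', hq3', hq4'⟩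
    by_contra hne
    rcases Nat.lt_or_ge q q' with h | h
    · obtain ⟨hqb, hall⟩ := fwd q (by omega) hq3 hq4
      have := hall q' (by omega) (by omega)
      omega
    · have h' : q' < q := by omega
      obtain ⟨hqb, hall⟩ := fwd q' (by omega) hq3' hq4'
      have := hall q (by omega) (by omega)
      omega
  · -- 1→0 precedes 0→1
    intro p q ⟨hp1, hp2, hp3, hp4⟩ ⟨hq1, hq2, hq3, hq4⟩
    by_contra hle
    have hqp : q ≤ p := by omega
    obtain ⟨hbp, hall⟩ := bwd p (by omega) (by omega) hp3 hp4
    have := hall q (by omega) (by omega)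
    omega
end

section
/- Fix integers k ≥ 1, m ≥ 1 and N ≥ 0, set τ = 1/(2k+2) and n = 36km. Suppose there exist functions E, mapping each integer sequence A of length n to a binary string E(A) ∈ {0,1}^N, and D, mapping a binary string of length N and a pair (i, j) with 1 ≤ i ≤ j ≤ n to a natural number, such that for every integer sequence A of length n and every 1 ≤ i ≤ j ≤ n, D(E(A), i, j) equals the number of distinct τ-majorities of A[i, j]. Then 2^N ≥ ((3k)!)^m, i.e., N ≥ m·log₂((3k)!). -/
open scoped Classical

namespace Stmt16

noncomputable local instance (priority := 2000) decEqZ : DecidableEq ℤ :=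
  fun a b => Classical.propDecidable (a = b)

lemma count_split (A : ℕ → ℤ) (i P j : ℕ) (h1 : i ≤ P + 1) (h2 : P ≤ j) (x : ℤ) :
    majCount A i j x = majCount A i P x + majCount A (P+1) j x := by
  unfold majCount
  have hu : Finset.Icc i j = Finset.Icc i P ∪ Finset.Icc (P+1) j := by
    ext y; simp only [Finset.mem_Icc, Finset.mem_union]; omega
  have hdisj : Disjoint ((Finset.Icc i P).filter (fun y => A y = x))
      ((Finset.Icc (P+1) j).filter (fun y => A y = x)) := by
    rw [Finset.disjoint_left]
    intro a ha hb
    simp only [Finset.mem_filter, Finset.mem_Icc] at ha hb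
    omega
  rw [hu, Finset.filter_union, Finset.card_union_of_disjoint hdisj]

lemma count_of_injOn (A : ℕ → ℤ) (a b : ℕ) (inj : Set.InjOn A (Finset.Icc a b : Set ℕ))
    (x : ℤ) :
    majCount A a b x = if x ∈ (Finset.Icc a b).image A then 1 else 0 := by
  unfold majCount
  by_cases hx : x ∈ (Finset.Icc a b).image A
  · rw [if_pos hx]
    obtain ⟨c, hc, rfl⟩ := Finset.mem_image.mp hx
    have hs : (Finset.Icc a b).filter (fun y => A y = A c) = {c} := by
      ext y
      simp only [Finset.mem_filter, Finset.mem_singleton]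
      constructor
      · rintro ⟨hy, he⟩
        exact inj (Finset.mem_coe.mpr hy) (Finset.mem_coe.mpr hc) he
      · rintro rfl; exact ⟨hc, rfl⟩
    rw [hs, Finset.card_singleton]
  · rw [if_neg hx, Finset.card_eq_zero, Finset.filter_eq_empty_iff]
    intro y hy he
    exact hx (Finset.mem_image.mpr ⟨y, hy, he⟩)

lemma majNum_union (k : ℕ) (A : ℕ → ℤ) (i P j : ℕ)
    (hiP : i ≤ P + 1) (hPj : P ≤ j) (hij : i ≤ j)
    (hL : j + 1 ≤ i + (2*k+1)) :
    majNum ((1:ℝ)/(2*(k:ℝ)+2)) A i j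
      = ((Finset.Icc i P).image A ∪ (Finset.Icc (P+1) j).image A).card := by
  unfold majNum
  have hu : Finset.Icc i j = Finset.Icc i P ∪ Finset.Icc (P+1) j := by
    ext y; simp only [Finset.mem_Icc, Finset.mem_union]; omega
  have him : (Finset.Icc i j).image A
      = (Finset.Icc i P).image A ∪ (Finset.Icc (P+1) j).image A := by
    rw [hu, Finset.image_union]
  rw [Finset.filter_true_of_mem, him]
  intro x hx
  obtain ⟨c, hc, rfl⟩ := Finset.mem_image.mp hx
  unfold IsMaj
  have hcount : 1 ≤ majCount A i j (A c) := by
    apply Finset.card_pos.mpr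
    exact ⟨c, Finset.mem_filter.mpr ⟨hc, rfl⟩⟩
  have hpos : (0:ℝ) < 2*(k:ℝ)+2 := by positivity
  have hlt : (1:ℝ)/(2*(k:ℝ)+2) * ((j:ℝ) - (i:ℝ) + 1) < 1 := by
    rw [div_mul_eq_mul_div, one_mul, div_lt_one hpos]
    have hc1 : ((j:ℝ) + 1) ≤ (i:ℝ) + (2*(k:ℝ)+1) := by exact_mod_cast hL
    linarith
  have : (1:ℝ) ≤ (majCount A i j (A c) : ℝ) := by exact_mod_cast hcount
  linarith

lemma majNum_inter (k : ℕ) (A : ℕ → ℤ) (i P j : ℕ)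
    (hiP : i ≤ P + 1) (hPj : P ≤ j) (hij : i ≤ j)
    (inj1 : Set.InjOn A (Finset.Icc i P : Set ℕ))
    (inj2 : Set.InjOn A (Finset.Icc (P+1) j : Set ℕ))
    (hL1 : i + (2*k+2) ≤ j + 1) (hL2 : j + 1 ≤ i + (4*k+3)) :
    majNum ((1:ℝ)/(2*(k:ℝ)+2)) A i j
      = ((Finset.Icc i P).image A ∩ (Finset.Icc (P+1) j).image A).card := by
  unfold majNum
  congr 1
  ext x
  simp only [Finset.mem_filter, Finset.mem_inter]
  have hpos : (0:ℝ) < 2*(k:ℝ)+2 := by positivity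
  have hc1 : (i:ℝ) + (2*(k:ℝ)+2) ≤ (j:ℝ) + 1 := by exact_mod_cast hL1
  have hc2 : (j:ℝ) + 1 ≤ (i:ℝ) + (4*(k:ℝ)+3) := by exact_mod_cast hL2
  have hτ1 : 1 ≤ (1:ℝ)/(2*(k:ℝ)+2) * ((j:ℝ) - (i:ℝ) + 1) := by
    rw [div_mul_eq_mul_div, one_mul, le_div_iff₀ hpos]
    linarith
  have hτ2 : (1:ℝ)/(2*(k:ℝ)+2) * ((j:ℝ) - (i:ℝ) + 1) < 2 := by
    rw [div_mul_eq_mul_div, one_mul, div_lt_iff₀ hpos]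
    linarith
  have hsplit := count_split A i P j hiP hPj x
  rw [count_of_injOn A i P inj1 x, count_of_injOn A (P+1) j inj2 x] at hsplit
  constructor
  · rintro ⟨hx, hmaj⟩
    unfold IsMaj at hmaj
    have h2 : 2 ≤ majCount A i j x := by
      by_contra hcon
      push_neg at hcon
      have : (majCount A i j x : ℝ) ≤ 1 := by
        have : majCount A i j x ≤ 1 := by omega
        exact_mod_cast this
      linarith
    by_cases m1 : x ∈ (Finset.Icc i P).image A
      <;> by_cases m2 : x ∈ (Finset.Icc (P+1) j).image A
      <;> simp [m1, m2] at hsplit <;> first | exact ⟨m1, m2⟩ | omega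
  · rintro ⟨m1, m2⟩
    have hmem : x ∈ (Finset.Icc i j).image A := by
      apply Finset.image_subset_image (Finset.Icc_subset_Icc le_rfl hPj) m1
    refine ⟨hmem, ?_⟩
    unfold IsMaj
    have hc : majCount A i j x = 2 := by rw [hsplit, if_pos m1, if_pos m2]
    rw [hc]
    exact_mod_cast hτ2

def pv (k : ℕ) (π : Equiv.Perm (Fin (3*k))) (s : ℕ) : ℕ :=
  if h : s < 3*k then (π ⟨s, h⟩ : Fin (3*k)).val else 0

lemma pv_lt (k : ℕ) (π : Equiv.Perm (Fin (3*k))) {s : ℕ} (h : s < 3*k) :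
    pv k π s < 3*k := by
  unfold pv; rw [dif_pos h]; exact (π ⟨s, h⟩).isLt

lemma pv_inj (k : ℕ) (π : Equiv.Perm (Fin (3*k))) {s s' : ℕ}
    (h : s < 3*k) (h' : s' < 3*k) (he : pv k π s = pv k π s') : s = s' := by
  unfold pv at he
  rw [dif_pos h, dif_pos h'] at he
  have h2 : π ⟨s, h⟩ = π ⟨s', h'⟩ := Fin.ext he
  exact congrArg Fin.val (π.injective h2)

noncomputable def seqA (k m : ℕ) (σ : Fin m → Equiv.Perm (Fin (3*k))) (p : ℕ) : ℤ :=
  let q := p - 1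
  let b := q / (36*k)
  let r := q % (36*k)
  if h : b < m then
    (if r < 3*k then ((r : ℤ))
     else if r < 6*k then ((pv k (σ ⟨b, h⟩) (r - 3*k) : ℕ) : ℤ)
     else if r < 9*k then (((r - 6*k : ℕ)) : ℤ)
     else -(p:ℤ) - 1)
  else -(p:ℤ) - 1

section eval

variable {k m : ℕ} (σ : Fin m → Equiv.Perm (Fin (3*k))) {b : ℕ}

lemma seq_divmod (hk : 1 ≤ k) (b c : ℕ) (hc : c < 36*k) :
    (36*k*b + c) / (36*k) = b ∧ (36*k*b + c) % (36*k) = c := by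
  have h36 : 0 < 36*k := by omega
  constructor
  · rw [Nat.mul_add_div h36, Nat.div_eq_of_lt hc]; omega
  
  · rw [Nat.mul_add_mod, Nat.mod_eq_of_lt hc]

lemma evalA_left (hb : b < m) (u : ℕ) (hu : u < 3*k) :
    seqA k m σ (36*k*b + 1 + u) = (u : ℤ) := by
  have hk' : 1 ≤ k := by by_contra h; omega
  have hq : 36*k*b + 1 + u - 1 = 36*k*b + u := by omega
  have hd := seq_divmod hk' b u (by omega)
  unfold seqA
  simp only [hq, hd.1, hd.2]
  rw [dif_pos hb, if_pos hu]

lemma evalA_mid (hb : b < m) (u : ℕ) (hu : u < 3*k) :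
    seqA k m σ (36*k*b + (3*k+1) + u) = ((pv k (σ ⟨b, hb⟩) u : ℕ) : ℤ) := by
  have hk' : 1 ≤ k := by by_contra h; omega
  have hq : 36*k*b + (3*k+1) + u - 1 = 36*k*b + (3*k + u) := by omega
  have hd := seq_divmod hk' b (3*k+u) (by omega)
  unfold seqA
  simp only [hq, hd.1, hd.2]
  rw [dif_pos hb, if_neg (by omega), if_pos (by omega : 3*k + u < 6*k)]
  have h3 : 3*k + u - 3*k = u := by omega
  rw [h3]

lemma evalA_right (hb : b < m) (u : ℕ) (hu : u < 3*k) :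
    seqA k m σ (36*k*b + (6*k+1) + u) = (u : ℤ) := by
  have hk' : 1 ≤ k := by by_contra h; omega
  have hq : 36*k*b + (6*k+1) + u - 1 = 36*k*b + (6*k + u) := by omega
  have hd := seq_divmod hk' b (6*k+u) (by omega)
  unfold seqA
  simp only [hq, hd.1, hd.2]
  rw [dif_pos hb, if_neg (by omega), if_neg (by omega), if_pos (by omega : 6*k + u < 9*k)]
  have h3 : 6*k + u - 6*k = u := by omega
  rw [h3]

end eval

noncomputable def ovR (k : ℕ) (π : Equiv.Perm (Fin (3*k))) (s e : ℕ) : ℕ :=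
  ((Finset.Ico s (3*k)).filter (fun u => pv k π u ≤ e)).card

noncomputable def ovL (k : ℕ) (π : Equiv.Perm (Fin (3*k))) (v t : ℕ) : ℕ :=
  ((Finset.Ico 0 t).filter (fun u => v ≤ pv k π u)).card

section setup

variable {k m : ℕ} (σ : Fin m → Equiv.Perm (Fin (3*k))) {b : ℕ}

lemma setupR (hb : b < m) (s e : ℕ) (hs : s ≤ 3*k) (he : e < 3*k) :
    Set.InjOn (seqA k m σ)
      (Finset.Icc (36*k*b + (3*k+1) + s) (36*k*b + 6*k) : Set ℕ) ∧
    Set.InjOn (seqA k m σ)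
      (Finset.Icc (36*k*b + 6*k + 1) (36*k*b + (6*k+1) + e) : Set ℕ) ∧
    ((Finset.Icc (36*k*b + (3*k+1) + s) (36*k*b + 6*k)).image (seqA k m σ)).card = 3*k - s ∧
    ((Finset.Icc (36*k*b + 6*k + 1) (36*k*b + (6*k+1) + e)).image (seqA k m σ)).card = e + 1 ∧
    (((Finset.Icc (36*k*b + (3*k+1) + s) (36*k*b + 6*k)).image (seqA k m σ)) ∩
      ((Finset.Icc (36*k*b + 6*k + 1) (36*k*b + (6*k+1) + e)).image (seqA k m σ))).card
      = ovR k (σ ⟨b, hb⟩) s e := by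
  set π := σ ⟨b, hb⟩ with hπ
  have hIcc1 : Finset.Icc (36*k*b + (3*k+1) + s) (36*k*b + 6*k)
      = (Finset.Ico s (3*k)).image (fun u => 36*k*b + (3*k+1) + u) := by
    ext p
    simp only [Finset.mem_Icc, Finset.mem_image, Finset.mem_Ico]
    constructor
    · intro hp
      exact ⟨p - (36*k*b + (3*k+1)), by omega, by omega⟩
    · rintro ⟨u, hu, rfl⟩; omega
  have himg1 : (Finset.Icc (36*k*b + (3*k+1) + s) (36*k*b + 6*k)).image (seqA k m σ)
      = (Finset.Ico s (3*k)).image (fun u => ((pv k π u : ℕ) : ℤ)) := by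
    rw [hIcc1, Finset.image_image]
    apply Finset.image_congr
    intro u hu
    simp only [Finset.coe_Ico, Set.mem_Ico] at hu
    simp only [Function.comp_apply]
    exact evalA_mid σ hb u hu.2
  have hIcc2 : Finset.Icc (36*k*b + 6*k + 1) (36*k*b + (6*k+1) + e)
      = (Finset.Icc 0 e).image (fun u => 36*k*b + (6*k+1) + u) := by
    ext p
    simp only [Finset.mem_Icc, Finset.mem_image]
    constructor
    · intro hp
      exact ⟨p - (36*k*b + (6*k+1)), by omega, by omega⟩
    · rintro ⟨u, hu, rfl⟩; omega
  have himg2 : (Finset.Icc (36*k*b + 6*k + 1) (36*k*b + (6*k+1) + e)).image (seqA k m σ)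
      = (Finset.Icc 0 e).image (fun u : ℕ => (u : ℤ)) := by
    rw [hIcc2, Finset.image_image]
    apply Finset.image_congr
    intro u hu
    simp only [Finset.coe_Icc, Set.mem_Icc] at hu
    simp only [Function.comp_apply]
    exact evalA_right σ hb u (by omega)
  have hinjZ : Set.InjOn (fun u => ((pv k π u : ℕ) : ℤ)) (Finset.Ico s (3*k) : Set ℕ) := by
    intro u hu u' hu' h
    simp only [Finset.coe_Ico, Set.mem_Ico] at hu hu'
    simp only [Nat.cast_inj] at h
    exact pv_inj k π hu.2 hu'.2 h
  have hinj2Z : Set.InjOn (fun u : ℕ => (u : ℤ)) (Finset.Icc 0 e : Set ℕ) := by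
    intro u _ u' _ h
    simp only [Nat.cast_inj] at h
    exact h
  have hcard1 : ((Finset.Icc (36*k*b + (3*k+1) + s) (36*k*b + 6*k)).image (seqA k m σ)).card
      = 3*k - s := by
    rw [himg1, Finset.card_image_of_injOn hinjZ, Nat.card_Ico]
  have hcard2 : ((Finset.Icc (36*k*b + 6*k + 1) (36*k*b + (6*k+1) + e)).image (seqA k m σ)).card
      = e + 1 := by
    rw [himg2, Finset.card_image_of_injOn hinj2Z, Nat.card_Icc]
    omega
  refine ⟨?_, ?_, hcard1, hcard2, ?_⟩
  · apply Finset.card_image_iff.mp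
    rw [hcard1, Nat.card_Icc]
    omega
  · apply Finset.card_image_iff.mp
    rw [hcard2, Nat.card_Icc]
    omega
  · have hinter : ((Finset.Icc (36*k*b + (3*k+1) + s) (36*k*b + 6*k)).image (seqA k m σ)) ∩
        ((Finset.Icc (36*k*b + 6*k + 1) (36*k*b + (6*k+1) + e)).image (seqA k m σ))
        = ((Finset.Ico s (3*k)).filter (fun u => pv k π u ≤ e)).image
            (fun u => ((pv k π u : ℕ) : ℤ)) := by
      rw [himg1, himg2]
      ext x
      simp only [Finset.mem_inter, Finset.mem_image, Finset.mem_Ico, Finset.mem_Icc,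
        Finset.mem_filter]
      constructor
      · rintro ⟨⟨u, hu, rfl⟩, ⟨w, hw, hwx⟩⟩
        have hws : pv k π u = w := by exact_mod_cast hwx.symm
        exact ⟨u, ⟨hu, by omega⟩, rfl⟩
      · rintro ⟨u, ⟨hu, hue⟩, rfl⟩
        exact ⟨⟨u, hu, rfl⟩, ⟨pv k π u, by omega, rfl⟩⟩
    rw [hinter, Finset.card_image_of_injOn
      (hinjZ.mono (Finset.coe_subset.mpr (Finset.filter_subset _ _)))]
    rfl

lemma setupL (hb : b < m) (v t : ℕ) (hv : v < 3*k) (ht : t ≤ 3*k) :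
    Set.InjOn (seqA k m σ)
      (Finset.Icc (36*k*b + 1 + v) (36*k*b + 3*k) : Set ℕ) ∧
    Set.InjOn (seqA k m σ)
      (Finset.Icc (36*k*b + 3*k + 1) (36*k*b + 3*k + t) : Set ℕ) ∧
    ((Finset.Icc (36*k*b + 1 + v) (36*k*b + 3*k)).image (seqA k m σ)).card = 3*k - v ∧
    ((Finset.Icc (36*k*b + 3*k + 1) (36*k*b + 3*k + t)).image (seqA k m σ)).card = t ∧
    (((Finset.Icc (36*k*b + 1 + v) (36*k*b + 3*k)).image (seqA k m σ)) ∩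
      ((Finset.Icc (36*k*b + 3*k + 1) (36*k*b + 3*k + t)).image (seqA k m σ))).card
      = ovL k (σ ⟨b, hb⟩) v t := by
  set π := σ ⟨b, hb⟩ with hπ
  have hIcc1 : Finset.Icc (36*k*b + 1 + v) (36*k*b + 3*k)
      = (Finset.Ico v (3*k)).image (fun u => 36*k*b + 1 + u) := by
    ext p
    simp only [Finset.mem_Icc, Finset.mem_image, Finset.mem_Ico]
    constructor
    · intro hp
      exact ⟨p - (36*k*b + 1), by omega, by omega⟩
    · rintro ⟨u, hu, rfl⟩; omega
  have himg1 : (Finset.Icc (36*k*b + 1 + v) (36*k*b + 3*k)).image (seqA k m σ)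
      = (Finset.Ico v (3*k)).image (fun u : ℕ => (u : ℤ)) := by
    rw [hIcc1, Finset.image_image]
    apply Finset.image_congr
    intro u hu
    simp only [Finset.coe_Ico, Set.mem_Ico] at hu
    simp only [Function.comp_apply]
    exact evalA_left σ hb u hu.2
  have hIcc2 : Finset.Icc (36*k*b + 3*k + 1) (36*k*b + 3*k + t)
      = (Finset.Ico 0 t).image (fun u => 36*k*b + (3*k+1) + u) := by
    ext p
    simp only [Finset.mem_Icc, Finset.mem_image, Finset.mem_Ico]
    constructor
    · intro hp
      exact ⟨p - (36*k*b + (3*k+1)), by omega, by omega⟩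
    · rintro ⟨u, hu, rfl⟩; omega
  have himg2 : (Finset.Icc (36*k*b + 3*k + 1) (36*k*b + 3*k + t)).image (seqA k m σ)
      = (Finset.Ico 0 t).image (fun u => ((pv k π u : ℕ) : ℤ)) := by
    rw [hIcc2, Finset.image_image]
    apply Finset.image_congr
    intro u hu
    simp only [Finset.coe_Ico, Set.mem_Ico] at hu
    simp only [Function.comp_apply]
    exact evalA_mid σ hb u (by omega)
  have hinjZ : Set.InjOn (fun u => ((pv k π u : ℕ) : ℤ)) (Finset.Ico 0 t : Set ℕ) := by
    intro u hu u' hu' h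
    simp only [Finset.coe_Ico, Set.mem_Ico] at hu hu'
    simp only [Nat.cast_inj] at h
    exact pv_inj k π (by omega) (by omega) h
  have hinj1Z : Set.InjOn (fun u : ℕ => (u : ℤ)) (Finset.Ico v (3*k) : Set ℕ) := by
    intro u _ u' _ h
    simp only [Nat.cast_inj] at h
    exact h
  have hcard1 : ((Finset.Icc (36*k*b + 1 + v) (36*k*b + 3*k)).image (seqA k m σ)).card
      = 3*k - v := by
    rw [himg1, Finset.card_image_of_injOn hinj1Z, Nat.card_Ico]
  have hcard2 : ((Finset.Icc (36*k*b + 3*k + 1) (36*k*b + 3*k + t)).image (seqA k m σ)).card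
      = t := by
    rw [himg2, Finset.card_image_of_injOn hinjZ, Nat.card_Ico]
    omega
  refine ⟨?_, ?_, hcard1, hcard2, ?_⟩
  · apply Finset.card_image_iff.mp
    rw [hcard1, Nat.card_Icc]
    omega
  · apply Finset.card_image_iff.mp
    rw [hcard2, Nat.card_Icc]
    omega
  · have hinter : ((Finset.Icc (36*k*b + 1 + v) (36*k*b + 3*k)).image (seqA k m σ)) ∩
        ((Finset.Icc (36*k*b + 3*k + 1) (36*k*b + 3*k + t)).image (seqA k m σ))
        = ((Finset.Ico 0 t).filter (fun u => v ≤ pv k π u)).image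
            (fun u => ((pv k π u : ℕ) : ℤ)) := by
      rw [himg1, himg2]
      ext x
      simp only [Finset.mem_inter, Finset.mem_image, Finset.mem_Ico, Finset.mem_filter]
      constructor
      · rintro ⟨⟨w, hw, hwx⟩, ⟨u, hu, rfl⟩⟩
        have hws : pv k π u = w := by exact_mod_cast hwx.symm
        exact ⟨u, ⟨hu, by omega⟩, rfl⟩
      · rintro ⟨u, ⟨hu, hue⟩, rfl⟩
        have hlt : pv k π u < 3*k := pv_lt k π (by omega)
        exact ⟨⟨pv k π u, by omega, rfl⟩, ⟨u, hu, rfl⟩⟩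
    rw [hinter, Finset.card_image_of_injOn
      (hinjZ.mono (Finset.coe_subset.mpr (Finset.filter_subset _ _)))]
    rfl

end setup

section glue

variable {k m : ℕ} (σ σ' : Fin m → Equiv.Perm (Fin (3*k))) {b : ℕ}

lemma ovR_eq (hb : b < m) (s e : ℕ) (hs : s ≤ 3*k) (he : e < 3*k) (hval : e ≤ s + k + 2)
    (heq : majNum ((1:ℝ)/(2*(k:ℝ)+2)) (seqA k m σ)
        (36*k*b + (3*k+1) + s) (36*k*b + (6*k+1) + e)
      = majNum ((1:ℝ)/(2*(k:ℝ)+2)) (seqA k m σ')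
        (36*k*b + (3*k+1) + s) (36*k*b + (6*k+1) + e)) :
    ovR k (σ ⟨b, hb⟩) s e = ovR k (σ' ⟨b, hb⟩) s e := by
  obtain ⟨inj1, inj2, hc1, hc2, hci⟩ := setupR σ hb s e hs he
  obtain ⟨inj1', inj2', hc1', hc2', hci'⟩ := setupR σ' hb s e hs he
  have hiP : 36*k*b + (3*k+1) + s ≤ 36*k*b + 6*k + 1 := by omega
  have hPj : 36*k*b + 6*k ≤ 36*k*b + (6*k+1) + e := by omega
  have hij : 36*k*b + (3*k+1) + s ≤ 36*k*b + (6*k+1) + e := by omega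
  by_cases hsm : 36*k*b + (6*k+1) + e + 1 ≤ 36*k*b + (3*k+1) + s + (2*k+1)
  · rw [majNum_union k (seqA k m σ) _ (36*k*b + 6*k) _ hiP hPj hij hsm,
        majNum_union k (seqA k m σ') _ (36*k*b + 6*k) _ hiP hPj hij hsm] at heq
    have hu := Finset.card_union_add_card_inter
      ((Finset.Icc (36*k*b + (3*k+1) + s) (36*k*b + 6*k)).image (seqA k m σ))
      ((Finset.Icc (36*k*b + 6*k + 1) (36*k*b + (6*k+1) + e)).image (seqA k m σ))
    have hu' := Finset.card_union_add_card_inter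
      ((Finset.Icc (36*k*b + (3*k+1) + s) (36*k*b + 6*k)).image (seqA k m σ'))
      ((Finset.Icc (36*k*b + 6*k + 1) (36*k*b + (6*k+1) + e)).image (seqA k m σ'))
    rw [hc1, hc2, hci] at hu
    rw [hc1', hc2', hci'] at hu'
    omega
  · have hL1 : 36*k*b + (3*k+1) + s + (2*k+2) ≤ 36*k*b + (6*k+1) + e + 1 := by omega
    have hL2 : 36*k*b + (6*k+1) + e + 1 ≤ 36*k*b + (3*k+1) + s + (4*k+3) := by omega
    rw [majNum_inter k (seqA k m σ) _ (36*k*b + 6*k) _ hiP hPj hij inj1 inj2 hL1 hL2,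
        majNum_inter k (seqA k m σ') _ (36*k*b + 6*k) _ hiP hPj hij inj1' inj2' hL1 hL2] at heq
    rw [hci, hci'] at heq
    exact heq

lemma ovL_eq (hb : b < m) (v t : ℕ) (hv : v < 3*k) (ht : t ≤ 3*k) (hval : t ≤ v + k + 3)
    (heq : majNum ((1:ℝ)/(2*(k:ℝ)+2)) (seqA k m σ)
        (36*k*b + 1 + v) (36*k*b + 3*k + t)
      = majNum ((1:ℝ)/(2*(k:ℝ)+2)) (seqA k m σ')
        (36*k*b + 1 + v) (36*k*b + 3*k + t)) :
    ovL k (σ ⟨b, hb⟩) v t = ovL k (σ' ⟨b, hb⟩) v t := by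
  obtain ⟨inj1, inj2, hc1, hc2, hci⟩ := setupL σ hb v t hv ht
  obtain ⟨inj1', inj2', hc1', hc2', hci'⟩ := setupL σ' hb v t hv ht
  have hiP : 36*k*b + 1 + v ≤ 36*k*b + 3*k + 1 := by omega
  have hPj : 36*k*b + 3*k ≤ 36*k*b + 3*k + t := by omega
  have hij : 36*k*b + 1 + v ≤ 36*k*b + 3*k + t := by omega
  by_cases hsm : 36*k*b + 3*k + t + 1 ≤ 36*k*b + 1 + v + (2*k+1)
  · rw [majNum_union k (seqA k m σ) _ (36*k*b + 3*k) _ hiP hPj hij hsm,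
        majNum_union k (seqA k m σ') _ (36*k*b + 3*k) _ hiP hPj hij hsm] at heq
    have hu := Finset.card_union_add_card_inter
      ((Finset.Icc (36*k*b + 1 + v) (36*k*b + 3*k)).image (seqA k m σ))
      ((Finset.Icc (36*k*b + 3*k + 1) (36*k*b + 3*k + t)).image (seqA k m σ))
    have hu' := Finset.card_union_add_card_inter
      ((Finset.Icc (36*k*b + 1 + v) (36*k*b + 3*k)).image (seqA k m σ'))
      ((Finset.Icc (36*k*b + 3*k + 1) (36*k*b + 3*k + t)).image (seqA k m σ'))
    rw [hc1, hc2, hci] at hu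
    rw [hc1', hc2', hci'] at hu'
    omega
  · have hL1 : 36*k*b + 1 + v + (2*k+2) ≤ 36*k*b + 3*k + t + 1 := by omega
    have hL2 : 36*k*b + 3*k + t + 1 ≤ 36*k*b + 1 + v + (4*k+3) := by omega
    rw [majNum_inter k (seqA k m σ) _ (36*k*b + 3*k) _ hiP hPj hij inj1 inj2 hL1 hL2,
        majNum_inter k (seqA k m σ') _ (36*k*b + 3*k) _ hiP hPj hij inj1' inj2' hL1 hL2] at heq
    rw [hci, hci'] at heq
    exact heq

end glue

lemma ovR_step (k : ℕ) (π : Equiv.Perm (Fin (3*k))) (s e : ℕ) (hs : s < 3*k) :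
    ovR k π s e = (if pv k π s ≤ e then 1 else 0) + ovR k π (s+1) e := by
  unfold ovR
  have hins : Finset.Ico s (3*k) = insert s (Finset.Ico (s+1) (3*k)) := by
    ext y; simp only [Finset.mem_Ico, Finset.mem_insert]; omega
  rw [hins, Finset.filter_insert]
  by_cases hc : pv k π s ≤ e
  · rw [if_pos hc, if_pos hc,
      Finset.card_insert_of_notMem (by simp only [Finset.mem_filter, Finset.mem_Ico]; omega)]
    omega
  · rw [if_neg hc, if_neg hc]
    omega

lemma ovL_step (k : ℕ) (π : Equiv.Perm (Fin (3*k))) (v t : ℕ) :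
    ovL k π v (t+1) = ovL k π v t + (if v ≤ pv k π t then 1 else 0) := by
  unfold ovL
  have hins : Finset.Ico 0 (t+1) = insert t (Finset.Ico 0 t) := by
    ext y; simp only [Finset.mem_Ico, Finset.mem_insert]; omega
  rw [hins, Finset.filter_insert]
  by_cases hc : v ≤ pv k π t
  · rw [if_pos hc, if_pos hc,
      Finset.card_insert_of_notMem (by simp only [Finset.mem_filter, Finset.mem_Ico]; omega)]
  · rw [if_neg hc, if_neg hc]
    omega

lemma recovery (k : ℕ) (π π' : Equiv.Perm (Fin (3*k)))
    (hR : ∀ s e, s ≤ 3*k → e < 3*k → e ≤ s + k + 2 → ovR k π s e = ovR k π' s e)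
    (hL : ∀ v t, v < 3*k → t ≤ 3*k → t ≤ v + k + 3 → ovL k π v t = ovL k π' v t) :
    π = π' := by
  have bitR : ∀ s e, s < 3*k → e < 3*k → e ≤ s + k + 2 →
      (pv k π s ≤ e ↔ pv k π' s ≤ e) := by
    intro s e hs he hv
    have h1 := hR s e (by omega) he hv
    have h2 := hR (s+1) e (by omega) he (by omega)
    rw [ovR_step k π s e hs, ovR_step k π' s e hs, h2] at h1
    split_ifs at h1 <;> omega
  have bitL : ∀ t v, t < 3*k → v < 3*k → t ≤ v + k + 2 →
      (v ≤ pv k π t ↔ v ≤ pv k π' t) := by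
    intro t v ht hv hval
    have h1 := hL v (t+1) hv (by omega) (by omega)
    have h2 := hL v t hv (by omega) (by omega)
    rw [ovL_step k π v t, ovL_step k π' v t, h2] at h1
    split_ifs at h1 <;> omega
  have key : ∀ s, s < 3*k → pv k π s = pv k π' s := by
    intro s hs
    have ha : pv k π s < 3*k := pv_lt k π hs
    have ha' : pv k π' s < 3*k := pv_lt k π' hs
    by_cases h1 : pv k π s ≤ s + k + 2
    · have hb1 : pv k π' s ≤ pv k π s := (bitR s (pv k π s) hs ha h1).mp le_rfl
      have hb2 : pv k π s ≤ pv k π' s := (bitR s (pv k π' s) hs ha' (by omega)).mpr le_rfl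
      omega
    · have h1' : ¬ (pv k π' s ≤ s + k + 2) := by
        intro hc
        have := (bitR s (pv k π' s) hs ha' hc).mpr le_rfl
        omega
      have hb1 : pv k π s ≤ pv k π' s := (bitL s (pv k π s) hs ha (by omega)).mp le_rfl
      have hb2 : pv k π' s ≤ pv k π s := (bitL s (pv k π' s) hs ha' (by omega)).mpr le_rfl
      omega
  apply Equiv.ext
  intro x
  have hx := key x.val x.isLt
  unfold pv at hx
  rw [dif_pos x.isLt, dif_pos x.isLt] at hx
  simp only [Fin.eta] at hx
  exact Fin.ext hx

end Stmt16

/-- Any `N`-bit encoding `E` of integer sequences of length `n = 36km`, from which a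
decoder `D` can recover the number of distinct `τ`-majorities of every range, with
`τ = 1/(2k+2)`, satisfies `2^N ≥ ((3k)!)^m`. -/


theorem stmt16 (k m N : ℕ) (hk : 1 ≤ k) (hm : 1 ≤ m)
    (E : (ℕ → ℤ) → (Fin N → Bool))
    (D : (Fin N → Bool) → ℕ → ℕ → ℕ)
    (hdec : ∀ A : ℕ → ℤ, ∀ i j : ℕ, 1 ≤ i → i ≤ j → j ≤ 36 * k * m →
      D (E A) i j = majNum ((1 : ℝ) / (2 * k + 2)) A i j) :
    ((3 * k).factorial) ^ m ≤ 2 ^ N := by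
  have hinj : Function.Injective
      (fun σ : Fin m → Equiv.Perm (Fin (3*k)) => E (Stmt16.seqA k m σ)) := by
    intro σ σ' hE
    simp only at hE
    have hmn : ∀ i j : ℕ, 1 ≤ i → i ≤ j → j ≤ 36*k*m →
        majNum ((1:ℝ)/(2*(k:ℝ)+2)) (Stmt16.seqA k m σ) i j
          = majNum ((1:ℝ)/(2*(k:ℝ)+2)) (Stmt16.seqA k m σ') i j := by
      intro i j h1 h2 h3
      rw [← hdec (Stmt16.seqA k m σ) i j h1 h2 h3,
        ← hdec (Stmt16.seqA k m σ') i j h1 h2 h3, hE]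
    funext b
    have hbm : (b : ℕ) + 1 ≤ m := b.isLt
    have hexp : 36*k*((b:ℕ)+1) = 36*k*(b:ℕ) + 36*k := by ring
    have hmul : 36*k*((b:ℕ)+1) ≤ 36*k*m := Nat.mul_le_mul le_rfl hbm
    apply Stmt16.recovery k
    · intro s e hs he hval
      have hq := Stmt16.ovR_eq σ σ' b.isLt s e hs he hval
        (hmn (36*k*(b:ℕ) + (3*k+1) + s) (36*k*(b:ℕ) + (6*k+1) + e)
          (by omega) (by omega) (by omega))
      simpa only [Fin.eta] using hq
    · intro v t hv ht hval
      have hq := Stmt16.ovL_eq σ σ' b.isLt v t hv ht hval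
        (hmn (36*k*(b:ℕ) + 1 + v) (36*k*(b:ℕ) + 3*k + t)
          (by omega) (by omega) (by omega))
      simpa only [Fin.eta] using hq
  have hcard := Fintype.card_le_of_injective _ hinj
  rw [Fintype.card_fun, Fintype.card_fun, Fintype.card_perm, Fintype.card_fin,
    Fintype.card_fin, Fintype.card_bool, Fintype.card_fin] at hcard
  exact hcard
end
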